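/- arXiv:1003.3078 — 11 statements merged into one kernel-verified Lean document; each statement's English description precedes it below -/
import Mathlib

section
/- Let F₁ ≠ F₂ be points in the Euclidean plane, O the midpoint of the segment F₁F₂, and let A, B be points such that dist F₁ A = dist F₂ B = dist F₁ F₂ / √2, dist A B = dist F₁ F₂, and A and B lie strictly on opposite sides of the line F₁F₂. Then the midpoint X of the segment AB lies on the lemniscate of Bernoulli with foci F₁ and F₂, i.e. dist X F₁ * dist X F₂ = (dist F₁ F₂ / 2)^2. -/
open EuclideanGeometry Real
local notation "⟪" x ", " y "⟫" => @inner ℝ _ _ x y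

private theorem linkage_algebra (D p q r s t : ℝ) (hs0 : s ≠ 0) (hs1 : (1:ℝ) - s ≠ 0)
    (h1 : (1-s)*(D/2) + s*p + (s-t)*q = 0)
    (h2 : (1-s)*p + s*(D/2) + (s-t)*r = 0)
    (h3 : (1-s)*q + s*r + (s-t)*D = 0)
    (h4 : p + q - r = D/2) :
    (2*D + 2*p + 2*q + 2*r) * (2*D + 2*p - 2*q - 2*r) = D^2 := by
  have hcase : (1 - s - t) * (p - D/2) = 0 := by linear_combination h2 - h1 - (t - s)*h4
  rcases mul_eq_zero.mp hcase with hm | hc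
  · have ht : t = 1 - s := by linarith
    subst ht
    have hq : q = -s*p - (3*s/2 - 1)*D := by linear_combination h3 + s*h4
    have hr : r = p + q - D/2 := by linarith
    have hL : 4*s*(1-s)*p = (6*s^2 - 6*s + 1)*D := by
      linear_combination 2*h1 - (4*s - 2)*hq
    have hp : p = (6*s^2 - 6*s + 1)*D / (4*s*(1-s)) := by
      field_simp
      linear_combination hL
    rw [hr, hq, hp]
    field_simp
    ring
  · have hp : p = D/2 := by linarith
    have hr : r = q := by linarith
    have h1' : (t-s)*q = D/2 := by linear_combination s*hp - h1
    have h3' : q = (t-s)*D := by linear_combination h3 - s*hr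
    have hq2 : q^2 = D^2/2 := by linear_combination q*h3' + D*h1'
    rw [hp, hr]
    linear_combination (-16)*hq2

private theorem linkage_inner {E : Type*} [NormedAddCommGroup E] [InnerProductSpace ℝ E]
    (u v w : E) (D s t : ℝ)
    (huu : ⟪u, u⟫ = D/2) (hvv : ⟪v, v⟫ = D/2) (hww : ⟪w, w⟫ = D)
    (hab : ⟪u - v - w, u - v - w⟫ = D)
    (hE : (1-s) • u + s • v + (s - t) • w = 0)
    (hs0 : s ≠ 0) (hs1 : (1:ℝ) - s ≠ 0) :
    ⟪u + v + w, u + v + w⟫ * ⟪u + v - w, u + v - w⟫ = D^2 := by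
  have h1 : ⟪u, (1-s) • u + s • v + (s-t) • w⟫ = 0 := by rw [hE, inner_zero_right]
  have h2 : ⟪v, (1-s) • u + s • v + (s-t) • w⟫ = 0 := by rw [hE, inner_zero_right]
  have h3 : ⟪w, (1-s) • u + s • v + (s-t) • w⟫ = 0 := by rw [hE, inner_zero_right]
  simp only [inner_add_right, real_inner_smul_right] at h1 h2 h3
  simp only [inner_sub_left, inner_sub_right] at hab
  simp only [inner_add_left, inner_add_right, inner_sub_left, inner_sub_right]
  rw [real_inner_comm u v] at h2
  rw [real_inner_comm u w, real_inner_comm v w] at h3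
  rw [huu] at h1
  rw [hvv] at h2
  rw [hww] at h3
  rw [real_inner_comm u v, real_inner_comm u w, real_inner_comm v w, huu, hvv, hww] at hab
  rw [real_inner_comm u v, real_inner_comm u w, real_inner_comm v w, huu, hvv, hww]
  have h4 : ⟪u, v⟫ + ⟪u, w⟫ - ⟪v, w⟫ = D/2 := by linarith
  linear_combination linkage_algebra D ⟪u, v⟫ ⟪u, w⟫ ⟪v, w⟫ s t hs0 hs1 h1 h2 h3 h4

/-- The midpoint of the bar `AB` of the three-stick linkage traces the
lemniscate of Bernoulli with foci `F₁`, `F₂`. -/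
theorem linkage_midpoint_mem_lemniscate
    (F₁ F₂ A B O X : EuclideanSpace ℝ (Fin 2))
    (hF : F₁ ≠ F₂)
    (hO : O = midpoint ℝ F₁ F₂)
    (hA : dist F₁ A = dist F₁ F₂ / Real.sqrt 2)
    (hB : dist F₂ B = dist F₁ F₂ / Real.sqrt 2)
    (hAB : dist A B = dist F₁ F₂)
    (hSide : (affineSpan ℝ ({F₁, F₂} : Set (EuclideanSpace ℝ (Fin 2)))).SOppSide A B)
    (hX : X = midpoint ℝ A B) :
    dist X F₁ * dist X F₂ = (dist F₁ F₂ / 2) ^ 2 := by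
  obtain ⟨P, hPmem, hPsbtw⟩ := hSide.exists_sbtw
  obtain ⟨s, hsIoo, hPs⟩ := hPsbtw.mem_image_Ioo
  have hPF : P - F₁ ∈ vectorSpan ℝ ({F₁, F₂} : Set (EuclideanSpace ℝ (Fin 2))) := by
    have := AffineSubspace.vsub_mem_direction hPmem
      (left_mem_affineSpan_pair ℝ F₁ F₂)
    rwa [direction_affineSpan] at this
  obtain ⟨t, ht⟩ := mem_vectorSpan_pair_rev.mp hPF
  have hE : (1-s) • (A - F₁) + s • (B - F₂) + (s - t) • (F₂ - F₁) = 0 := by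
    have h2 : t • (F₂ - F₁) = (s • (B - A) + A) - F₁ := by
      rw [show s • (B - A) + A = P from by
        rw [← hPs, AffineMap.lineMap_apply]; simp [vsub_eq_sub, vadd_eq_add]]
      simpa [vsub_eq_sub] using ht
    linear_combination (norm := module) -h2
  set d := dist F₁ F₂ with hd
  have hd2 : (d / Real.sqrt 2) ^ 2 = d^2 / 2 := by
    rw [div_pow, sq_sqrt (by norm_num : (0:ℝ) ≤ 2)]
  have huu : ⟪A - F₁, A - F₁⟫ = d^2 / 2 := by
    rw [real_inner_self_eq_norm_sq, ← dist_eq_norm, dist_comm, hA, hd2]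
  have hvv : ⟪B - F₂, B - F₂⟫ = d^2 / 2 := by
    rw [real_inner_self_eq_norm_sq, ← dist_eq_norm, dist_comm, hB, hd2]
  have hww : ⟪F₂ - F₁, F₂ - F₁⟫ = d^2 := by
    rw [real_inner_self_eq_norm_sq, ← dist_eq_norm, dist_comm]
  have hab : ⟪(A - F₁) - (B - F₂) - (F₂ - F₁), (A - F₁) - (B - F₂) - (F₂ - F₁)⟫ = d^2 := by
    rw [show (A - F₁) - (B - F₂) - (F₂ - F₁) = A - B from by module,
      real_inner_self_eq_norm_sq, ← dist_eq_norm, hAB]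
  have key := linkage_inner (A - F₁) (B - F₂) (F₂ - F₁) (d^2) s t huu hvv hww hab hE
    (ne_of_gt hsIoo.1) (by have := hsIoo.2; intro h; linarith [sub_eq_zero.mp h])
  have hmid : X + X = A + B := by
    rw [hX]; exact midpoint_add_self ℝ A B
  have e1 : 4 * dist X F₁ ^ 2
      = ⟪(A - F₁) + (B - F₂) + (F₂ - F₁), (A - F₁) + (B - F₂) + (F₂ - F₁)⟫ := by
    rw [show (A - F₁) + (B - F₂) + (F₂ - F₁) = (2:ℝ) • (X - F₁) from by
      linear_combination (norm := module) -hmid]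
    rw [real_inner_smul_left, real_inner_smul_right, real_inner_self_eq_norm_sq, ← dist_eq_norm]
    ring
  have e2 : 4 * dist X F₂ ^ 2
      = ⟪(A - F₁) + (B - F₂) - (F₂ - F₁), (A - F₁) + (B - F₂) - (F₂ - F₁)⟫ := by
    rw [show (A - F₁) + (B - F₂) - (F₂ - F₁) = (2:ℝ) • (X - F₂) from by
      linear_combination (norm := module) -hmid]
    rw [real_inner_smul_left, real_inner_smul_right, real_inner_self_eq_norm_sq, ← dist_eq_norm]
    ring
  have h16 : (4 * dist X F₁ ^ 2) * (4 * dist X F₂ ^ 2) = (d^2)^2 := by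
    rw [e1, e2]; exact key
  have hsq : (dist X F₁ * dist X F₂) ^ 2 = ((d / 2) ^ 2) ^ 2 := by
    linear_combination h16 / 16
  exact (sq_eq_sq₀ (mul_nonneg dist_nonneg dist_nonneg) (sq_nonneg _)).mp hsq
end

section
/- Let F₁ ≠ F₂ be points in the Euclidean plane and let A, B, X form a linkage configuration (dist F₁ A = dist F₂ B = dist F₁ F₂ / √2, dist A B = dist F₁ F₂, A and B strictly on opposite sides of line F₁F₂, X the midpoint of AB). Then dist F₁ X = dist F₁ B / √2 and dist F₂ X = dist F₂ A / √2 (these are the metric consequences of the similarity of triangles AF₁X and ABF₁, and of triangles BXF₂ and BF₂A). -/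
open EuclideanGeometry Real

lemma median_sq (F A B : EuclideanSpace ℝ (Fin 2)) :
    dist F (midpoint ℝ A B) ^ 2
      = (2 * dist F A ^ 2 + 2 * dist F B ^ 2 - dist A B ^ 2) / 4 := by
  have key := parallelogram_law_with_norm ℝ (F - A) (F - B)
  have h1 : F - A + (F - B) = (2:ℝ) • (F - midpoint ℝ A B) := by
    simp [midpoint_eq_smul_add, smul_sub, smul_smul]
    module
  have h2 : F - A - (F - B) = B - A := by abel
  rw [h1, h2, norm_smul] at key
  simp only [dist_eq_norm] at *
  have hBA : ‖B - A‖ = ‖A - B‖ := by rw [norm_sub_rev]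
  rw [hBA] at key
  have h2n : ‖(2:ℝ)‖ = 2 := by norm_num
  rw [h2n] at key
  nlinarith [key]

/-- In the linkage configuration, the similarities `△AF₁X ∼ △ABF₁` and
`△BXF₂ ∼ △BF₂A` give `|F₁X| = |F₁B|/√2` and `|F₂X| = |F₂A|/√2`. -/
theorem linkage_dist_foci_midpoint
    (F₁ F₂ A B X : EuclideanSpace ℝ (Fin 2))
    (hF : F₁ ≠ F₂)
    (hA : dist F₁ A = dist F₁ F₂ / Real.sqrt 2)
    (hB : dist F₂ B = dist F₁ F₂ / Real.sqrt 2)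
    (hAB : dist A B = dist F₁ F₂)
    (hSide : (affineSpan ℝ ({F₁, F₂} : Set (EuclideanSpace ℝ (Fin 2)))).SOppSide A B)
    (hX : X = midpoint ℝ A B) :
    dist F₁ X = dist F₁ B / Real.sqrt 2 ∧ dist F₂ X = dist F₂ A / Real.sqrt 2 := by
  subst hX
  have s2 : Real.sqrt 2 ^ 2 = 2 := Real.sq_sqrt (by norm_num)
  have s2pos : (0:ℝ) < Real.sqrt 2 := Real.sqrt_pos.mpr (by norm_num)
  constructor
  · have h := median_sq F₁ A B
    have hA2 : dist F₁ A ^ 2 = dist F₁ F₂ ^ 2 / 2 := by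
      rw [hA, div_pow, s2]
    rw [hA2, hAB] at h
    have h' : dist F₁ (midpoint ℝ A B) ^ 2 = (dist F₁ B / Real.sqrt 2) ^ 2 := by
      rw [div_pow, s2]; linarith
    nlinarith [dist_nonneg (x := F₁) (y := midpoint ℝ A B),
      div_nonneg (dist_nonneg (x := F₁) (y := B)) s2pos.le]
  · have h := median_sq F₂ A B
    have hB2 : dist F₂ B ^ 2 = dist F₁ F₂ ^ 2 / 2 := by
      rw [hB, div_pow, s2]
    have hF2 : dist F₁ F₂ = dist F₂ F₁ := dist_comm _ _
    rw [hB2, hAB] at h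
    have h' : dist F₂ (midpoint ℝ A B) ^ 2 = (dist F₂ A / Real.sqrt 2) ^ 2 := by
      rw [div_pow, s2]; linarith
    nlinarith [dist_nonneg (x := F₂) (y := midpoint ℝ A B),
      div_nonneg (dist_nonneg (x := F₂) (y := A)) s2pos.le]
end

section
/- Let F₁ ≠ F₂ be points in the Euclidean plane and let A, B, X form a linkage configuration (dist F₁ A = dist F₂ B = dist F₁ F₂ / √2, dist A B = dist F₁ F₂, A and B strictly on opposite sides of line F₁F₂, X the midpoint of AB). Then the unsigned angles satisfy ∠ A F₁ X = ∠ A B F₁ = ∠ B A F₂ = ∠ X F₂ B. -/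
open EuclideanGeometry Real
open RealInnerProductSpace

private lemma linkage_nn_sq_eq {x y : ℝ} (hx : 0 ≤ x) (hy : 0 ≤ y) (h : x ^ 2 = y ^ 2) :
    x = y := by nlinarith [sq_nonneg (x - y), sq_nonneg (x + y)]

private lemma linkage_half_div (p q : ℝ) : (p / 2) / (2⁻¹ * q) = p / q := by
  rcases eq_or_ne q 0 with h | h
  · simp [h]
  · field_simp

set_option maxHeartbeats 2000000 in
/-- In the linkage configuration the unsigned angles satisfy
`∠ A F₁ X = ∠ A B F₁ = ∠ B A F₂ = ∠ X F₂ B`. -/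
theorem linkage_angles_eq
    (F₁ F₂ A B X : EuclideanSpace ℝ (Fin 2))
    (hF : F₁ ≠ F₂)
    (hA : dist F₁ A = dist F₁ F₂ / Real.sqrt 2)
    (hB : dist F₂ B = dist F₁ F₂ / Real.sqrt 2)
    (hAB : dist A B = dist F₁ F₂)
    (hSide : (affineSpan ℝ ({F₁, F₂} : Set (EuclideanSpace ℝ (Fin 2)))).SOppSide A B)
    (hX : X = midpoint ℝ A B) :
    ∠ A F₁ X = ∠ A B F₁ ∧ ∠ A B F₁ = ∠ B A F₂ ∧ ∠ B A F₂ = ∠ X F₂ B := by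
  subst hX
  set u : EuclideanSpace ℝ (Fin 2) := A - F₁ with hu
  set v : EuclideanSpace ℝ (Fin 2) := B - F₂ with hv
  set w : EuclideanSpace ℝ (Fin 2) := F₂ - F₁ with hw
  set d : ℝ := dist F₁ F₂ with hd
  have hd0 : 0 < d := dist_pos.2 hF
  obtain ⟨s, hs⟩ : ∃ x : ℝ, d ^ 2 = x := ⟨_, rfl⟩
  have hs0 : 0 < s := by rw [← hs]; positivity
  -- basic norms
  have hwn : ‖w‖ = d := by rw [hw, ← dist_eq_norm, dist_comm]
  have hun : ‖u‖ = d / Real.sqrt 2 := by rw [hu, ← dist_eq_norm, dist_comm]; exact hA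
  have hvn : ‖v‖ = d / Real.sqrt 2 := by rw [hv, ← dist_eq_norm, dist_comm]; exact hB
  have hhalf : (d / Real.sqrt 2) ^ 2 = s / 2 := by
    rw [div_pow, Real.sq_sqrt (by norm_num : (0:ℝ) ≤ 2), hs]
  -- basic inner products
  obtain ⟨a, ha⟩ : ∃ x : ℝ, ⟪u, w⟫ = x := ⟨_, rfl⟩
  obtain ⟨b, hb⟩ : ∃ x : ℝ, ⟪v, w⟫ = x := ⟨_, rfl⟩
  obtain ⟨c, hc⟩ : ∃ x : ℝ, ⟪u, v⟫ = x := ⟨_, rfl⟩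
  have hwu : ⟪w, u⟫ = a := by rw [real_inner_comm]; exact ha
  have hwv : ⟪w, v⟫ = b := by rw [real_inner_comm]; exact hb
  have hvu : ⟪v, u⟫ = c := by rw [real_inner_comm]; exact hc
  have huu : ⟪u, u⟫ = s / 2 := by rw [real_inner_self_eq_norm_sq, hun, hhalf]
  have hvv : ⟪v, v⟫ = s / 2 := by rw [real_inner_self_eq_norm_sq, hvn, hhalf]
  have hww : ⟪w, w⟫ = s := by rw [real_inner_self_eq_norm_sq, hwn, hs]
  have hBA : B - A = w + v - u := by rw [hu, hv, hw]; abel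
  have hBAn : ‖B - A‖ = d := by rw [← dist_eq_norm, dist_comm]; exact hAB
  -- the linkage constraint on c
  have hcc : c = b - a + s / 2 := by
    have h1 : ⟪w + v - u, w + v - u⟫ = s := by
      rw [← hBA, real_inner_self_eq_norm_sq, hBAn, hs]
    simp only [inner_add_left, inner_add_right, inner_sub_left, inner_sub_right,
      ha, hb, hc, hwu, hwv, hvu, huu, hvv, hww] at h1
    linarith
  -- Cauchy–Schwarz bounds
  have ha2 : a ^ 2 ≤ s ^ 2 / 2 := by
    have h1 : |a| ≤ d / Real.sqrt 2 * d := by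
      rw [← ha, ← hun, ← hwn]; exact abs_real_inner_le_norm u w
    nlinarith [sq_abs a, abs_nonneg a, hhalf, hs0]
  have hb2 : b ^ 2 ≤ s ^ 2 / 2 := by
    have h1 : |b| ≤ d / Real.sqrt 2 * d := by
      rw [← hb, ← hvn, ← hwn]; exact abs_real_inner_le_norm v w
    nlinarith [sq_abs b, abs_nonneg b, hhalf, hs0]
  -- extract the opposite-side data
  obtain ⟨⟨p₁, hp₁, p₂, hp₂, hray⟩, hAn, hBn⟩ := hSide
  have haa : a ^ 2 < s ^ 2 / 2 := by
    rcases lt_or_eq_of_le ha2 with h | h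
    · exact h
    · exfalso
      have hw0 : w ≠ 0 := by
        rw [hw, sub_ne_zero]; exact fun h' => hF h'.symm
      have habs : |a| = d / Real.sqrt 2 * d := by
        have : |a| ^ 2 = (d / Real.sqrt 2 * d) ^ 2 := by
          rw [sq_abs, h, mul_pow, hhalf, hs]; ring
        exact linkage_nn_sq_eq (abs_nonneg a) (by positivity) this
      have hprod : 0 < ‖w‖ * ‖u‖ := by
        rw [hwn, hun]; positivity
      have h1 : |⟪w, u⟫ / (‖w‖ * ‖u‖)| = 1 := by
        rw [abs_div, abs_of_pos hprod, hwu, habs, hwn, hun]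
        field_simp
      obtain ⟨-, r', hr'0, hru⟩ := (abs_real_inner_div_norm_mul_norm_eq_one_iff w u).1 h1
      apply hAn
      have hA' : A = r' • (F₂ -ᵥ F₁) +ᵥ F₁ := by
        have : u = r' • w := hru
        rw [hu, hw] at this
        simp only [vsub_eq_sub, vadd_eq_add]
        rw [← this]; abel
      rw [hA']
      exact smul_vsub_vadd_mem_affineSpan_pair r' F₁ F₂
  -- parametrize the points on the line
  obtain ⟨t₁, ht₁⟩ : ∃ t : ℝ, t • (F₂ -ᵥ F₁) = p₁ -ᵥ F₁ :=
    vadd_left_mem_affineSpan_pair.1 (by rwa [vsub_vadd])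
  obtain ⟨t₂, ht₂⟩ : ∃ t : ℝ, t • (F₂ -ᵥ F₁) = p₂ -ᵥ F₁ :=
    vadd_left_mem_affineSpan_pair.1 (by rwa [vsub_vadd])
  have hx0 : A -ᵥ p₁ ≠ 0 := vsub_ne_zero.2 fun h' => hAn (h' ▸ hp₁)
  have hy0 : p₂ -ᵥ B ≠ 0 := vsub_ne_zero.2 fun h' => hBn (h' ▸ hp₂)
  obtain ⟨r, hr0, hrr⟩ := hray.exists_pos_left hx0 hy0
  simp only [vsub_eq_sub] at ht₁ ht₂ hrr
  have hp₁' : p₁ = t₁ • w + F₁ := by rw [hw, ht₁]; abel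
  have hp₂' : p₂ = t₂ • w + F₁ := by rw [hw, ht₂]; abel
  have hB' : B = p₂ - r • (A - p₁) := by rw [hrr]; abel
  have hveq : v = (t₂ - 1 + r * t₁) • w - r • u := by
    rw [hv, hu, hB', hp₁', hp₂', hw]
    module
  -- scalar consequences
  set l : ℝ := t₂ - 1 + r * t₁ with hl
  have e1 : b = l * s - r * a := by
    rw [← hb, hveq]
    simp only [inner_sub_left, real_inner_smul_left, hww, ha]
  have e2 : c = l * a - r * (s / 2) := by
    rw [← hc, hveq]
    simp only [inner_sub_right, real_inner_smul_right, ha, huu]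
  have e3 : s / 2 = l * b - r * c := by
    have h1 : ⟪l • w - r • u, v⟫ = s / 2 := by rw [← hveq, hvv]
    simp only [inner_sub_left, real_inner_smul_left, hwv, hvu, hc] at h1
    linarith
  -- derive the branch relation
  have hE : r * (s ^ 2 / 2 - a ^ 2) = a * b - c * s := by
    linear_combination (-a) * e1 + s * e2
  have hG : s ^ 2 / 2 - b ^ 2 = r * (a * b - c * s) := by
    linear_combination (-b) * e1 + s * e3
  have hP2 : (c * s - a * b) ^ 2 = (s ^ 2 / 2 - a ^ 2) * (s ^ 2 / 2 - b ^ 2) := by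
    linear_combination (c * s - a * b) * hE - (s ^ 2 / 2 - a ^ 2) * hG
  have hba : b ≠ a := by
    intro h
    rw [h] at hcc
    have h1 : c = s / 2 := by linarith
    have h2 : (r + 1) * (s ^ 2 / 2 - a ^ 2) = 0 := by
      rw [h] at hE
      linear_combination hE + (-s) * h1
    nlinarith [h2, hr0, haa]
  have hC : s ^ 2 + 3 * s / 2 * (b - a) - 2 * a * b = 0 := by
    have hz : (s * (b - a)) * (s ^ 2 + 3 * s / 2 * (b - a) - 2 * a * b) = 0 := by
      linear_combination hP2 - s * (c * s - a * b + (b - a + s / 2) * s - a * b) * hcc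
    rcases mul_eq_zero.1 hz with h | h
    · exact absurd h (mul_ne_zero hs0.ne' (sub_ne_zero.2 hba))
    · exact h
  -- positivity facts
  have hsb : 0 < s + b := by nlinarith [hb2, hs0]
  have hsa : 0 < s - a := by nlinarith [haa, hs0]
  have h3b : 0 < 3 * s / 2 + 2 * b := by nlinarith [hb2, hs0]
  have h3a : 0 < 3 * s / 2 - 2 * a := by nlinarith [haa, hs0]
  -- composite vectors and their norms
  have hN2 : ‖w + v‖ ^ 2 = 3 * s / 2 + 2 * b := by
    rw [← real_inner_self_eq_norm_sq]
    simp only [inner_add_left, inner_add_right, hww, hvv, hwv, hvu, hb]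
    linarith
  have hN3 : ‖w - u‖ ^ 2 = 3 * s / 2 - 2 * a := by
    rw [← real_inner_self_eq_norm_sq]
    simp only [inner_sub_left, inner_sub_right, hww, huu, hwu, ha]
    linarith
  obtain ⟨N2, hN2d⟩ : ∃ x : ℝ, ‖w + v‖ = x := ⟨_, rfl⟩
  obtain ⟨N3, hN3d⟩ : ∃ x : ℝ, ‖w - u‖ = x := ⟨_, rfl⟩
  rw [hN2d] at hN2
  rw [hN3d] at hN3
  have hN2nn : 0 ≤ N2 := hN2d ▸ norm_nonneg (w + v)
  have hN3nn : 0 ≤ N3 := hN3d ▸ norm_nonneg (w - u)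
  have hN2pos : 0 < N2 := by
    rcases hN2nn.lt_or_eq with h | h
    · exact h
    · rw [← h] at hN2; norm_num at hN2; linarith
  have hN3pos : 0 < N3 := by
    rcases hN3nn.lt_or_eq with h | h
    · exact h
    · rw [← h] at hN3; norm_num at hN3; linarith
  -- the four cosine arguments
  have hang : ∀ P Q R : EuclideanSpace ℝ (Fin 2), ∠ P Q R = Real.arccos (⟪P - Q, R - Q⟫ / (‖P - Q‖ * ‖R - Q‖)) :=
    fun _ _ _ => rfl
  -- angle 2 : ∠ A B F₁
  have hAB2 : A - B = u - v - w := by rw [hu, hv, hw]; abel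
  have hFB : F₁ - B = -(w + v) := by rw [hv, hw]; abel
  have hABn : ‖A - B‖ = d := by rw [← dist_eq_norm]; exact hAB
  have harg2 : ∠ A B F₁ = Real.arccos ((s + b) / (d * N2)) := by
    have hABn2 : ‖u - v - w‖ = d := by rw [← hAB2, ← dist_eq_norm]; exact hAB
    rw [hang A B F₁, hAB2, hFB, norm_neg, hABn2, hN2d]
    congr 2
    simp only [inner_neg_right, inner_add_right, inner_sub_left, ha, hb, hc, hwu, hwv, hvu,
      huu, hvv, hww]
    linarith
  -- angle 3 : ∠ B A F₂
  have hBA3 : B - A = w + v - u := hBA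
  have hFA : F₂ - A = w - u := by rw [hu, hw]; abel
  have harg3 : ∠ B A F₂ = Real.arccos ((s - a) / (d * N3)) := by
    have hBAn2 : ‖w + v - u‖ = d := by rw [← hBA3]; exact hBAn
    rw [hang B A F₂, hBA3, hFA, hBAn2, hN3d]
    congr 2
    simp only [inner_sub_left, inner_sub_right, inner_add_left, ha, hb, hc, hwu, hwv, hvu,
      huu, hvv, hww]
    linarith
  -- angle 1 : ∠ A F₁ X
  have hXF1 : midpoint ℝ A B - F₁ = (2:ℝ)⁻¹ • (u + v + w) := by
    rw [midpoint_eq_smul_add, invOf_eq_inv (2:ℝ), hu, hv, hw]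
    module
  have hXF1n : ‖midpoint ℝ A B - F₁‖ = 2⁻¹ * ‖u + v + w‖ := by
    rw [hXF1, norm_smul]
    norm_num
  have hN1 : ‖u + v + w‖ ^ 2 = 3 * s + 4 * b := by
    rw [← real_inner_self_eq_norm_sq]
    simp only [inner_add_left, inner_add_right, ha, hb, hc, hwu, hwv, hvu, huu, hvv, hww]
    linarith
  have hden1 : (d / Real.sqrt 2) * ‖u + v + w‖ = d * N2 := by
    apply linkage_nn_sq_eq (by positivity) (mul_nonneg hd0.le hN2nn)
    rw [mul_pow, mul_pow, hhalf, hN1, hN2, hs]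
    ring
  have harg1 : ∠ A F₁ (midpoint ℝ A B) = Real.arccos ((s + b) / (d * N2)) := by
    rw [hang A F₁ (midpoint ℝ A B), ← hu, hXF1n, hXF1, hun]
    congr 1
    have hnum : ⟪u, (2:ℝ)⁻¹ • (u + v + w)⟫ = (s + b) / 2 := by
      rw [real_inner_smul_right]
      simp only [inner_add_right, ha, hc, huu]
      rw [hcc]; ring
    rw [hnum, show (d / Real.sqrt 2) * (2⁻¹ * ‖u + v + w‖) = 2⁻¹ * ((d / Real.sqrt 2) * ‖u + v + w‖) by ring,
      hden1, linkage_half_div]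
  -- angle 4 : ∠ X F₂ B
  have hXF2 : midpoint ℝ A B - F₂ = (2:ℝ)⁻¹ • (u + v - w) := by
    rw [midpoint_eq_smul_add, invOf_eq_inv (2:ℝ), hu, hv, hw]
    module
  have hXF2n : ‖midpoint ℝ A B - F₂‖ = 2⁻¹ * ‖u + v - w‖ := by
    rw [hXF2, norm_smul]
    norm_num
  have hN4 : ‖u + v - w‖ ^ 2 = 3 * s - 4 * a := by
    rw [← real_inner_self_eq_norm_sq]
    simp only [inner_add_left, inner_add_right, inner_sub_left, inner_sub_right,
      ha, hb, hc, hwu, hwv, hvu, huu, hvv, hww]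
    linarith
  have hden4 : ‖u + v - w‖ * (d / Real.sqrt 2) = d * N3 := by
    apply linkage_nn_sq_eq (mul_nonneg (norm_nonneg _) (by positivity)) (mul_nonneg hd0.le hN3nn)
    rw [mul_pow, mul_pow, hhalf, hN4, hN3, hs]
    ring
  have harg4 : ∠ (midpoint ℝ A B) F₂ B = Real.arccos ((s - a) / (d * N3)) := by
    rw [hang (midpoint ℝ A B) F₂ B, ← hv, hXF2n, hXF2, hvn]
    congr 1
    have hnum : ⟪(2:ℝ)⁻¹ • (u + v - w), v⟫ = (s - a) / 2 := by
      rw [real_inner_smul_left]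
      simp only [inner_add_left, inner_sub_left, hc, hvv, hwv]
      rw [hcc]; ring
    rw [hnum, show (2⁻¹ * ‖u + v - w‖) * (d / Real.sqrt 2) = 2⁻¹ * (‖u + v - w‖ * (d / Real.sqrt 2)) by ring,
      hden4, linkage_half_div]
  -- the middle equality
  have hTT : (s + b) / (d * N2) = (s - a) / (d * N3) := by
    rw [div_eq_div_iff (mul_pos hd0 hN2pos).ne' (mul_pos hd0 hN3pos).ne']
    have key : ((s + b) * (d * N3)) ^ 2 = ((s - a) * (d * N2)) ^ 2 := by
      have e : ((s + b) * (d * N3)) ^ 2 = (s + b) ^ 2 * (d ^ 2 * N3 ^ 2) := by ring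
      have e' : ((s - a) * (d * N2)) ^ 2 = (s - a) ^ 2 * (d ^ 2 * N2 ^ 2) := by ring
      rw [e, e', hN3, hN2, hs]
      linear_combination (s * (a + b)) * hC
    refine linkage_nn_sq_eq ?_ ?_ key
    · exact mul_nonneg hsb.le (mul_nonneg hd0.le hN3nn)
    · exact mul_nonneg hsa.le (mul_nonneg hd0.le hN2nn)
  exact ⟨by rw [harg1, harg2], by rw [harg2, harg3, hTT], by rw [harg3, harg4]⟩
end

section
/- Let F₁ ≠ F₂ be points in the Euclidean plane and O the midpoint of F₁F₂. Let A and B be two distinct points on the circle with center F₁ and radius dist F₁ O / √2, such that the line through A and B passes through O. If X is any point on the line AB with dist O X = dist A B, then X lies on the lemniscate of Bernoulli with foci F₁ and F₂, i.e. dist X F₁ * dist X F₂ = (dist F₁ F₂ / 2)^2. -/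
/-!
Put `a = dist F₁ O`. Since `O` is the midpoint of `F₁F₂`, for every point `X` the parallelogram
identity gives `(|XF₁| |XF₂|)² = (a² + |OX|²)² - 4 ⟪OX, OF₁⟫²`. The secant `AB` through `O` of the
circle of radius `a / √2` about `F₁` satisfies `4 ⟪AB, OF₁⟫² = |AB|² (|AB|² + 2a²)`, because the
power of `O` is `a² / 2`. As `OX = ±AB`, the right-hand side collapses to `a⁴`.
-/

open EuclideanGeometry Real

section

variable {V P : Type*} [NormedAddCommGroup V] [InnerProductSpace ℝ V] [MetricSpace P]
  [NormedAddTorsor V P]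

open RealInnerProductSpace

theorem norm_sub_sq_mul_norm_add_sq (x y : V) :
    ‖x - y‖ ^ 2 * ‖x + y‖ ^ 2 = (‖x‖ ^ 2 + ‖y‖ ^ 2) ^ 2 - 4 * ⟪x, y⟫ ^ 2 := by
  rw [norm_sub_sq_real, norm_add_sq_real]
  ring

theorem sq_dist_mul_dist_midpoint (F₁ F₂ X : P) :
    (dist X F₁ * dist X F₂) ^ 2 =
      (dist F₁ (midpoint ℝ F₁ F₂) ^ 2 + dist (midpoint ℝ F₁ F₂) X ^ 2) ^ 2 -
        4 * ⟪X -ᵥ midpoint ℝ F₁ F₂, F₁ -ᵥ midpoint ℝ F₁ F₂⟫ ^ 2 := by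
  set O := midpoint ℝ F₁ F₂
  have hF₁ : X -ᵥ F₁ = (X -ᵥ O) - (F₁ -ᵥ O) := (vsub_sub_vsub_cancel_right X F₁ O).symm
  have hF₂ : X -ᵥ F₂ = (X -ᵥ O) + (F₁ -ᵥ O) := by
    rw [left_vsub_midpoint, ← midpoint_vsub_right, vsub_add_vsub_cancel]
  rw [mul_pow, dist_eq_norm_vsub V X, dist_eq_norm_vsub V X, hF₁, hF₂,
    norm_sub_sq_mul_norm_add_sq, dist_eq_norm_vsub V F₁, dist_comm, dist_eq_norm_vsub V X]
  ring

theorem exists_smul_vsub_of_mem_affineSpan_pair {A B X Y : P} (hX : X ∈ line[ℝ, A, B])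
    (hY : Y ∈ line[ℝ, A, B]) : ∃ k : ℝ, k • (B -ᵥ A) = X -ᵥ Y := by
  rw [← mem_vectorSpan_pair_rev, ← direction_affineSpan]
  exact AffineSubspace.vsub_mem_direction hX hY

theorem inner_sq_eq_of_mem_affineSpan_pair_of_dist_eq {A B O X : P}
    (hO : O ∈ line[ℝ, A, B]) (hX : X ∈ line[ℝ, A, B]) (hOX : dist O X = dist A B) (v : V) :
    ⟪X -ᵥ O, v⟫ ^ 2 = ⟪B -ᵥ A, v⟫ ^ 2 := by
  obtain ⟨k, hk⟩ := exists_smul_vsub_of_mem_affineSpan_pair hX hO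
  rcases eq_or_ne (B -ᵥ A) 0 with hu | hu
  · rw [← hk, hu, smul_zero]
  have hk1 : |k| = 1 := by
    rw [dist_comm, dist_eq_norm_vsub V, ← hk, norm_smul, Real.norm_eq_abs,
      dist_comm, dist_eq_norm_vsub V] at hOX
    exact (mul_eq_right₀ (norm_ne_zero_iff.mpr hu)).mp hOX
  rw [← hk, real_inner_smul_left, mul_pow, ← sq_abs k, hk1, one_pow, one_mul]

/-- `dist O c ^ 2 - r ^ 2` is the power of `O`; the identity says that the chord `AB` is the
difference of the two roots of the quadratic cutting the line through `O` with the sphere. -/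
theorem inner_sq_eq_of_dist_eq_of_mem_affineSpan_pair {A B O c : P} {r : ℝ}
    (hA : dist A c = r) (hB : dist B c = r) (hO : O ∈ line[ℝ, A, B]) :
    4 * ⟪B -ᵥ A, c -ᵥ O⟫ ^ 2 = dist A B ^ 2 * (dist A B ^ 2 + 4 * (dist O c ^ 2 - r ^ 2)) := by
  obtain ⟨t, ht⟩ := exists_smul_vsub_of_mem_affineSpan_pair hO (left_mem_affineSpan_pair ℝ A B)
  set u := B -ᵥ A
  set w := O -ᵥ c
  have norm_sq (s : ℝ) : ‖w + s • u‖ ^ 2 = ‖w‖ ^ 2 + 2 * s * ⟪w, u⟫ + s ^ 2 * ‖u‖ ^ 2 := by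
    rw [norm_add_sq_real, real_inner_smul_right, norm_smul, mul_pow, Real.norm_eq_abs, sq_abs]
    ring
  have hAc : A -ᵥ c = w + (-t) • u := by
    rw [neg_smul, ht, ← sub_eq_add_neg, vsub_sub_vsub_cancel_left]
  have hBc : B -ᵥ c = w + (1 - t) • u := by
    rw [sub_smul, one_smul, ← vsub_add_vsub_cancel B A c, hAc, neg_smul]
    abel
  have eA := norm_sq (-t)
  have eB := norm_sq (1 - t)
  rw [← hAc, ← dist_eq_norm_vsub, hA] at eA
  rw [← hBc, ← dist_eq_norm_vsub, hB] at eB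
  rw [dist_comm, dist_eq_norm_vsub V B, dist_eq_norm_vsub V O, ← neg_vsub_eq_vsub_rev O c,
    inner_neg_right, neg_sq, real_inner_comm]
  linear_combination (4 * ‖u‖ ^ 2 + 2 * ⟪w, u⟫ - 2 * t * ‖u‖ ^ 2 - ‖u‖ ^ 2) * eA
    - (2 * ⟪w, u⟫ - 2 * t * ‖u‖ ^ 2 - ‖u‖ ^ 2) * eB

end

theorem secant_construction_mem_lemniscate_general
    (F₁ F₂ O A B X : EuclideanSpace ℝ (Fin 2))
    (hO : O = midpoint ℝ F₁ F₂)
    (hA : dist F₁ A = dist F₁ O / Real.sqrt 2)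
    (hB : dist F₁ B = dist F₁ O / Real.sqrt 2)
    (hOline : O ∈ affineSpan ℝ ({A, B} : Set (EuclideanSpace ℝ (Fin 2))))
    (hXline : X ∈ affineSpan ℝ ({A, B} : Set (EuclideanSpace ℝ (Fin 2))))
    (hOX : dist O X = dist A B) :
    dist X F₁ * dist X F₂ = (dist F₁ F₂ / 2) ^ 2 := by
  have ha : dist F₁ F₂ / 2 = dist F₁ O := by
    rw [hO, dist_left_midpoint (𝕜 := ℝ), Real.norm_two, inv_mul_eq_div]
  have hr : (dist F₁ O / √2) ^ 2 = dist F₁ O ^ 2 / 2 := by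
    rw [div_pow, sq_sqrt zero_le_two]
  have chord := inner_sq_eq_of_dist_eq_of_mem_affineSpan_pair
    ((dist_comm A F₁).trans hA) ((dist_comm B F₁).trans hB) hOline
  have hXO := inner_sq_eq_of_mem_affineSpan_pair_of_dist_eq hOline hXline hOX (F₁ -ᵥ O)
  have hsq : (dist X F₁ * dist X F₂) ^ 2 = (dist F₁ O ^ 2) ^ 2 := by
    rw [dist_comm O F₁, hr] at chord
    rw [sq_dist_mul_dist_midpoint, ← hO, hXO, hOX]
    linear_combination -chord
  rw [ha, ← pow_left_inj₀ (by positivity) (by positivity) two_ne_zero, hsq]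

/-- Maclaurin-style construction: if `A`, `B` are distinct points of the circle with
center `F₁` and radius `|F₁O|/√2` whose line passes through `O`, and `X` is a point
of this line with `|OX| = |AB|`, then `X` lies on the lemniscate of Bernoulli with
foci `F₁`, `F₂`. -/
theorem secant_construction_mem_lemniscate
    (F₁ F₂ O A B X : EuclideanSpace ℝ (Fin 2))
    (hF : F₁ ≠ F₂)
    (hO : O = midpoint ℝ F₁ F₂)
    (hAB : A ≠ B)
    (hA : dist F₁ A = dist F₁ O / Real.sqrt 2)
    (hB : dist F₁ B = dist F₁ O / Real.sqrt 2)
    (hOline : O ∈ affineSpan ℝ ({A, B} : Set (EuclideanSpace ℝ (Fin 2))))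
    (hXline : X ∈ affineSpan ℝ ({A, B} : Set (EuclideanSpace ℝ (Fin 2))))
    (hOX : dist O X = dist A B) :
    dist X F₁ * dist X F₂ = (dist F₁ F₂ / 2) ^ 2 :=
  secant_construction_mem_lemniscate_general F₁ F₂ O A B X hO hA hB hOline hXline hOX
end

section
/- Let F₁ ≠ F₂ be points in the Euclidean plane, O the midpoint of F₁F₂, and let A, B, X form a linkage configuration (dist F₁ A = dist F₂ B = dist F₁ F₂ / √2, dist A B = dist F₁ F₂, A and B strictly on opposite sides of line F₁F₂, X the midpoint of AB) with X ≠ O. Suppose the lines F₁A and F₂B meet in a point P, and let Q be the reflection of P across the line F₁F₂. Then Q is the image of X under inversion in the circle with center O and radius dist O F₁; that is, Q lies on the ray from O through X and dist O X * dist O Q = (dist O F₁)^2. -/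
/-!
Write `u = A - F₁`, `v = B - F₂`, `f = F₂ - F₁` and `P = F₁ + s u = F₂ + t v`. Expanding
`|AB| = |F₁F₂|` with `|u|² = |v|² = |f|²/2` gives `(s + t - 1) (|f|²/2 - ⟪u, v⟫) = 0`; the second
factor vanishes only when `u = v`, i.e. when `B` is a translate of `A` along the line `F₁F₂`, which
the opposite-side condition excludes. So `s + t = 1`, and then both `Q` and the inversion image
of `X` equal `O + s (F₂ - A) = O - st (u + v)`: the midpoint of `P` and this point lies on `F₁F₂`
and their difference is orthogonal to `f`, while `X - O = (u + v) / 2` and `-st |u + v|² = |f|²/2`.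
-/

open EuclideanGeometry Real
open scoped RealInnerProductSpace

namespace EuclideanGeometry

variable {V P : Type*} [NormedAddCommGroup V] [InnerProductSpace ℝ V] [MetricSpace P]
  [NormedAddTorsor V P]

theorem reflection_affineSpan_pair_eq {p₁ p₂ p q : P} (hm : midpoint ℝ p q ∈ line[ℝ, p₁, p₂])
    (hpq : ⟪p -ᵥ q, p₂ -ᵥ p₁⟫ = 0) : reflection line[ℝ, p₁, p₂] p = q := by
  have hperp : p -ᵥ midpoint ℝ p q ∈ line[ℝ, p₁, p₂].directionᗮ := by
    rw [direction_affineSpan, vectorSpan_pair, Submodule.mem_orthogonal_singleton_iff_inner_right,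
      left_vsub_midpoint, inner_smul_right, ← neg_vsub_eq_vsub_rev p₂, inner_neg_left,
      real_inner_comm, hpq, neg_zero, mul_zero]
  have h := reflection_orthogonal_vadd hm hperp
  rwa [vsub_vadd, neg_vsub_eq_vsub_rev, midpoint_vsub_left, ← right_vsub_midpoint,
    vsub_vadd] at h

theorem sameRay_vsub_inversion_vsub (c x : P) (R : ℝ) :
    SameRay ℝ (x -ᵥ c) (inversion c R x -ᵥ c) := by
  rw [inversion_vsub_center]
  exact SameRay.sameRay_nonneg_smul_right _ (sq_nonneg _)

theorem dist_center_mul_dist_center_inversion {c x : P} (hx : x ≠ c) (R : ℝ) :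
    dist c x * dist c (inversion c R x) = R ^ 2 := by
  rw [dist_comm c (inversion c R x), dist_inversion_center, dist_comm c x]
  field_simp [dist_ne_zero.mpr hx]

end EuclideanGeometry

namespace AffineSubspace

variable {V P : Type*} [AddCommGroup V] [Module ℝ V] [AddTorsor V P]

theorem vsub_ne_vsub_of_sOppSide {p₁ p₂ x y : P} (h : line[ℝ, p₁, p₂].SOppSide x y) :
    x -ᵥ p₁ ≠ y -ᵥ p₂ := by
  intro hxy
  have hy : y = (p₂ -ᵥ p₁) +ᵥ x := by
    rw [eq_vadd_iff_vsub_eq, ← vsub_sub_vsub_cancel_right y x p₁, hxy,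
      ← vsub_add_vsub_cancel y p₂ p₁, add_sub_cancel_left]
  rw [hy, sOppSide_vadd_right_iff (vsub_mem_direction (right_mem_affineSpan_pair ℝ _ _)
    (left_mem_affineSpan_pair ℝ _ _))] at h
  exact not_sOppSide_self _ _ h

end AffineSubspace

namespace Linkage

theorem smul_sub_eq {M : Type*} [AddCommGroup M] [Module ℝ M] {u v f : M} {s t : ℝ}
    (hP : s • u - t • v = f) (hst : s + t = 1) : s • (f - u) = -(s * t) • (u + v) := by
  rw [← hP, show s = 1 - t by linarith]
  module

section Vectors

variable {V : Type*} [NormedAddCommGroup V] [InnerProductSpace ℝ V] {u v f : V} {s t : ℝ}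

theorem inner_left_eq (hP : s • u - t • v = f) : ⟪u, f⟫ = s * ‖u‖ ^ 2 - t * ⟪u, v⟫ := by
  rw [← hP, inner_sub_right, real_inner_smul_right, real_inner_smul_right,
    real_inner_self_eq_norm_sq]

theorem inner_right_eq (hP : s • u - t • v = f) : ⟪v, f⟫ = s * ⟪u, v⟫ - t * ‖v‖ ^ 2 := by
  rw [← hP, inner_sub_right, real_inner_smul_right, real_inner_smul_right,
    real_inner_self_eq_norm_sq, real_inner_comm]

theorem norm_sq_eq (hP : s • u - t • v = f) :
    ‖f‖ ^ 2 = s ^ 2 * ‖u‖ ^ 2 - 2 * (s * t) * ⟪u, v⟫ + t ^ 2 * ‖v‖ ^ 2 := by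
  rw [← hP, norm_sub_sq_real, norm_smul, norm_smul, real_inner_smul_left, real_inner_smul_right,
    mul_pow, mul_pow, Real.norm_eq_abs, Real.norm_eq_abs, sq_abs, sq_abs]
  ring

variable (hu : ‖u‖ ^ 2 = ‖f‖ ^ 2 / 2) (hv : ‖v‖ ^ 2 = ‖f‖ ^ 2 / 2) (hP : s • u - t • v = f)
include hu hv hP

theorem add_eq_one (hAB : ‖u - v - f‖ = ‖f‖) (huv : u ≠ v) : s + t = 1 := by
  have hgap : 0 < ‖f‖ ^ 2 / 2 - ⟪u, v⟫ := by
    have h := pow_pos (norm_pos_iff.mpr (sub_ne_zero.mpr huv)) 2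
    rw [norm_sub_sq_real, hu, hv] at h
    linarith
  have hAB' : ⟪u, v⟫ + ⟪u, f⟫ - ⟪v, f⟫ = ‖f‖ ^ 2 / 2 := by
    have h := congrArg (· ^ 2) hAB
    simp only [norm_sub_sq_real, inner_sub_left, hu, hv] at h
    linarith
  rw [inner_left_eq hP, inner_right_eq hP, hu, hv] at hAB'
  have h : (s + t - 1) * (‖f‖ ^ 2 / 2 - ⟪u, v⟫) = 0 := by linear_combination hAB'
  linarith [(mul_eq_zero.mp h).resolve_right hgap.ne']

variable (hst : s + t = 1)
include hst

theorem neg_mul_mul_norm_add_sq : -(s * t) * ‖u + v‖ ^ 2 = ‖f‖ ^ 2 / 2 := by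
  have h := norm_sq_eq hP
  obtain rfl : t = 1 - s := by linarith
  rw [hu, hv] at h
  rw [norm_add_sq_real, hu, hv]
  linear_combination -h

theorem mul_two_mul_inner_sub_norm_sq : s * (2 * ⟪u, f⟫ - ‖f‖ ^ 2) = ‖f‖ ^ 2 / 2 := by
  have h := norm_sq_eq hP
  obtain rfl : t = 1 - s := by linarith
  rw [hu, hv] at h
  rw [inner_left_eq hP, hu]
  linear_combination -h

end Vectors

section Points

variable {V : Type*} [NormedAddCommGroup V] [InnerProductSpace ℝ V] {F₁ F₂ A B : V} {s t : ℝ}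
  (hu : ‖A - F₁‖ ^ 2 = ‖F₂ - F₁‖ ^ 2 / 2) (hv : ‖B - F₂‖ ^ 2 = ‖F₂ - F₁‖ ^ 2 / 2)
  (hP : s • (A - F₁) - t • (B - F₂) = F₂ - F₁) (hst : s + t = 1)
include hu hv hP hst

theorem reflection_lineMap_eq :
    reflection line[ℝ, F₁, F₂] (AffineMap.lineMap F₁ A s) = midpoint ℝ F₁ F₂ + s • (F₂ - A) := by
  apply reflection_affineSpan_pair_eq
  · convert AffineMap.lineMap_mem_affineSpan_pair ((2 * s + 1) / 4) F₁ F₂ using 1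
    simp only [midpoint_eq_smul_add, invOf_eq_inv, AffineMap.lineMap_apply_module']
    module
  · have h := mul_two_mul_inner_sub_norm_sq hu hv hP hst
    rw [AffineMap.lineMap_apply_module', midpoint_eq_smul_add, invOf_eq_inv, vsub_eq_sub,
      vsub_eq_sub, show s • (A - F₁) + F₁ - ((2⁻¹ : ℝ) • (F₁ + F₂) + s • (F₂ - A)) =
        s • ((2 : ℝ) • (A - F₁) - (F₂ - F₁)) - (2⁻¹ : ℝ) • (F₂ - F₁) by module,
      inner_sub_left, real_inner_smul_left, real_inner_smul_left, inner_sub_left,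
      real_inner_smul_left, real_inner_self_eq_norm_sq]
    linear_combination h

theorem inversion_midpoint_eq :
    inversion (midpoint ℝ F₁ F₂) (dist (midpoint ℝ F₁ F₂) F₁) (midpoint ℝ A B) =
      midpoint ℝ F₁ F₂ + s • (F₂ - A) := by
  have hX : midpoint ℝ A B - midpoint ℝ F₁ F₂ = (2⁻¹ : ℝ) • (A - F₁ + (B - F₂)) := by
    simp only [midpoint_eq_smul_add, invOf_eq_inv]
    module
  have hR : midpoint ℝ F₁ F₂ - F₁ = (2⁻¹ : ℝ) • (F₂ - F₁) := by
    simp only [midpoint_eq_smul_add, invOf_eq_inv]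
    module
  rw [inversion, vsub_eq_sub, vadd_eq_add, add_comm, dist_eq_norm, dist_eq_norm, hX, hR,
    show F₂ - A = F₂ - F₁ - (A - F₁) by abel, smul_sub_eq hP hst]
  congr 1
  rcases eq_or_ne (A - F₁ + (B - F₂)) 0 with h0 | h0
  · simp [h0]
  have h := neg_mul_mul_norm_add_sq hu hv hP hst
  rw [smul_smul, norm_smul, norm_smul]
  congr 1
  have := norm_ne_zero_iff.mpr h0
  field_simp
  linear_combination -2 * h

end Points

end Linkage

theorem linkage_reflection_is_inversion_of_midpoint_general
    (F₁ F₂ A B X O P Q : EuclideanSpace ℝ (Fin 2))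
    (hO : O = midpoint ℝ F₁ F₂)
    (hA : dist F₁ A = dist F₁ F₂ / Real.sqrt 2)
    (hB : dist F₂ B = dist F₁ F₂ / Real.sqrt 2)
    (hAB : dist A B = dist F₁ F₂)
    (hSide : (affineSpan ℝ ({F₁, F₂} : Set (EuclideanSpace ℝ (Fin 2)))).SOppSide A B)
    (hX : X = midpoint ℝ A B)
    (hXO : X ≠ O)
    (hP₁ : P ∈ affineSpan ℝ ({F₁, A} : Set (EuclideanSpace ℝ (Fin 2))))
    (hP₂ : P ∈ affineSpan ℝ ({F₂, B} : Set (EuclideanSpace ℝ (Fin 2))))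
    (hQ : Q = EuclideanGeometry.reflection
      (affineSpan ℝ ({F₁, F₂} : Set (EuclideanSpace ℝ (Fin 2)))) P) :
    Q = EuclideanGeometry.inversion O (dist O F₁) X ∧
      SameRay ℝ (X -ᵥ O) (Q -ᵥ O) ∧
      dist O X * dist O Q = dist O F₁ ^ 2 := by
  obtain ⟨s, rfl⟩ := mem_affineSpan_pair_iff_exists_lineMap_eq.mp hP₁
  obtain ⟨t, hP⟩ := mem_affineSpan_pair_iff_exists_lineMap_eq.mp hP₂
  have hu : ‖A - F₁‖ ^ 2 = ‖F₂ - F₁‖ ^ 2 / 2 := by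
    rw [← dist_eq_norm, ← dist_eq_norm, dist_comm, hA, dist_comm, div_pow, sq_sqrt zero_le_two]
  have hv : ‖B - F₂‖ ^ 2 = ‖F₂ - F₁‖ ^ 2 / 2 := by
    rw [← dist_eq_norm, ← dist_eq_norm, dist_comm, hB, dist_comm, div_pow, sq_sqrt zero_le_two]
  have hAB' : ‖A - F₁ - (B - F₂) - (F₂ - F₁)‖ = ‖F₂ - F₁‖ := by
    rw [show A - F₁ - (B - F₂) - (F₂ - F₁) = A - B by abel, ← dist_eq_norm, ← dist_eq_norm,
      hAB, dist_comm]
  have hPv : s • (A - F₁) - t • (B - F₂) = F₂ - F₁ := by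
    rw [AffineMap.lineMap_apply_module', AffineMap.lineMap_apply_module'] at hP
    linear_combination (norm := module) -hP
  have hst := Linkage.add_eq_one hu hv hPv hAB' (AffineSubspace.vsub_ne_vsub_of_sOppSide hSide)
  obtain rfl : Q = inversion O (dist O F₁) X := by
    rw [hQ, hO, hX, Linkage.reflection_lineMap_eq hu hv hPv hst,
      Linkage.inversion_midpoint_eq hu hv hPv hst]
  exact ⟨rfl, sameRay_vsub_inversion_vsub O X _, dist_center_mul_dist_center_inversion hXO _⟩

/-- If `P` is the meeting point of lines `F₁A`, `F₂B` of the linkage configuration and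
`Q` is its reflection in the line `F₁F₂`, then `Q` is the image of `X` under inversion
in the circle with center `O` and radius `|OF₁|`: `Q` lies on the ray `OX` and
`|OX|·|OQ| = |OF₁|²`. -/
theorem linkage_reflection_is_inversion_of_midpoint
    (F₁ F₂ A B X O P Q : EuclideanSpace ℝ (Fin 2))
    (hF : F₁ ≠ F₂)
    (hO : O = midpoint ℝ F₁ F₂)
    (hA : dist F₁ A = dist F₁ F₂ / Real.sqrt 2)
    (hB : dist F₂ B = dist F₁ F₂ / Real.sqrt 2)
    (hAB : dist A B = dist F₁ F₂)
    (hSide : (affineSpan ℝ ({F₁, F₂} : Set (EuclideanSpace ℝ (Fin 2)))).SOppSide A B)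
    (hX : X = midpoint ℝ A B)
    (hXO : X ≠ O)
    (hP₁ : P ∈ affineSpan ℝ ({F₁, A} : Set (EuclideanSpace ℝ (Fin 2))))
    (hP₂ : P ∈ affineSpan ℝ ({F₂, B} : Set (EuclideanSpace ℝ (Fin 2))))
    (hQ : Q = EuclideanGeometry.reflection
      (affineSpan ℝ ({F₁, F₂} : Set (EuclideanSpace ℝ (Fin 2)))) P) :
    Q = EuclideanGeometry.inversion O (dist O F₁) X ∧
      SameRay ℝ (X -ᵥ O) (Q -ᵥ O) ∧
      dist O X * dist O Q = dist O F₁ ^ 2 :=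
  linkage_reflection_is_inversion_of_midpoint_general F₁ F₂ A B X O P Q hO hA hB hAB hSide hX hXO
    hP₁ hP₂ hQ
end

section
/- Let F₁ ≠ F₂ be points in the Euclidean plane and O the midpoint of F₁F₂. The image of the equilateral hyperbola with foci F₁, F₂ (the set {Y | |dist Y F₁ − dist Y F₂| = dist F₁ F₂ / √2}) under inversion in the circle with center O and radius dist O F₁ is exactly the lemniscate of Bernoulli with foci F₁, F₂ (the set {X | dist X F₁ * dist X F₂ = (dist F₁ F₂ / 2)^2}) with the point O removed. -/
open EuclideanGeometry Real

/-
The circle of inversion, with center `O` and radius `R = |OF₁| = |OF₂|`, passes through both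
foci, so the inversion fixes them, and for `X ≠ O` it multiplies the distance from `X` to a
point of that circle by `R / |XO|`. Hence the lemniscate condition
`|XF₁| |XF₂| = R²` at `X` becomes `|YF₁| |YF₂| = |YO|²` at the image `Y`, and by Apollonius'
theorem `|YF₁|² + |YF₂|² = 2 |YO|² + 2 R²` the latter is exactly `(|YF₁| - |YF₂|)² = 2 R²`,
the equation of the equilateral hyperbola.
-/

section

variable {V P : Type*} [NormedAddCommGroup V] [InnerProductSpace ℝ V] [MetricSpace P]
  [NormedAddTorsor V P]

def equilateralHyperbola (F₁ F₂ : P) : Set P :=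
  {Y | |dist Y F₁ - dist Y F₂| = dist F₁ F₂ / √2}

def lemniscate (F₁ F₂ : P) : Set P :=
  {X | dist X F₁ * dist X F₂ = (dist F₁ F₂ / 2) ^ 2}

theorem mem_equilateralHyperbola_iff {F₁ F₂ Y : P} :
    Y ∈ equilateralHyperbola F₁ F₂ ↔ dist Y F₁ * dist Y F₂ = dist Y (midpoint ℝ F₁ F₂) ^ 2 := by
  have apollonius :=
    dist_sq_add_dist_sq_eq_two_mul_dist_midpoint_sq_add_half_dist_sq Y F₁ F₂
  rw [equilateralHyperbola, Set.mem_ofPred_eq,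
    ← sq_eq_sq₀ (abs_nonneg _) (by positivity), sq_abs, div_pow, sq_sqrt zero_le_two]
  constructor <;> intro h
  · linear_combination (apollonius - h) / 2
  · linear_combination apollonius - 2 * h

theorem dist_inversion_of_mem_sphere {c x y : P} {R : ℝ} (hx : x ≠ c)
    (hy : y ∈ Metric.sphere c R) :
    dist (inversion c R x) y = R * dist x y / dist x c := by
  rcases eq_or_ne y c with rfl | hyc
  · obtain rfl : R = 0 := by simpa [eq_comm] using hy
    simp [inversion_zero_radius]
  rw [eq_div_iff (dist_ne_zero.2 hx), dist_inversion_mul_dist_center_eq hx hyc,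
    inversion_of_mem_sphere hy, Metric.mem_sphere.1 hy, mul_comm]

theorem mul_dist_inversion_eq_dist_center_sq_iff {c x F₁ F₂ : P} {R : ℝ} (hR : R ≠ 0)
    (hx : x ≠ c) (h₁ : F₁ ∈ Metric.sphere c R) (h₂ : F₂ ∈ Metric.sphere c R) :
    dist (inversion c R x) F₁ * dist (inversion c R x) F₂ = dist (inversion c R x) c ^ 2 ↔
      dist x F₁ * dist x F₂ = R ^ 2 := by
  have hxc : dist x c ≠ 0 := dist_ne_zero.2 hx
  rw [dist_inversion_of_mem_sphere hx h₁, dist_inversion_of_mem_sphere hx h₂,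
    dist_inversion_center,
    show R * dist x F₁ / dist x c * (R * dist x F₂ / dist x c) =
      R ^ 2 / dist x c ^ 2 * (dist x F₁ * dist x F₂) by ring,
    show (R ^ 2 / dist x c) ^ 2 = R ^ 2 / dist x c ^ 2 * R ^ 2 by ring,
    mul_right_inj' (by positivity)]

end

/-- The image of the equilateral hyperbola with foci `F₁`, `F₂` under inversion in
the circle with center `O = midpoint F₁ F₂` and radius `|OF₁|` is the lemniscate of
Bernoulli with foci `F₁`, `F₂`, with the double point `O` removed. -/
theorem inversion_image_equilateral_hyperbola_eq_lemniscate
    (F₁ F₂ O : EuclideanSpace ℝ (Fin 2))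
    (hF : F₁ ≠ F₂)
    (hO : O = midpoint ℝ F₁ F₂) :
    EuclideanGeometry.inversion O (dist O F₁) ''
        {Y : EuclideanSpace ℝ (Fin 2) |
          |dist Y F₁ - dist Y F₂| = dist F₁ F₂ / Real.sqrt 2} =
      {X : EuclideanSpace ℝ (Fin 2) |
          dist X F₁ * dist X F₂ = (dist F₁ F₂ / 2) ^ 2} \ {O} := by
  change inversion O _ '' equilateralHyperbola F₁ F₂ = lemniscate F₁ F₂ \ {O}
  have hOF₁ : dist O F₁ = dist F₁ F₂ / 2 := by
    rw [hO, dist_midpoint_left]; norm_num; ring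
  have hOF₂ : dist O F₂ = dist O F₁ := by
    rw [hO, dist_midpoint_right, dist_midpoint_left]
  have hR : dist O F₁ ≠ 0 := by
    rw [hOF₁]; exact div_ne_zero (dist_ne_zero.2 hF) two_ne_zero
  have h₁ : F₁ ∈ Metric.sphere O (dist O F₁) := Metric.mem_sphere'.2 rfl
  have h₂ : F₂ ∈ Metric.sphere O (dist O F₁) := Metric.mem_sphere'.2 hOF₂
  rw [(inversion_involutive O hR).image_eq_preimage_symm]
  ext X
  rw [Set.mem_preimage, mem_equilateralHyperbola_iff, ← hO]
  rcases eq_or_ne X O with rfl | hX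
  · simp [inversion_self, hOF₂, hR]
  · rw [mul_dist_inversion_eq_dist_center_sq_iff hR hX h₁ h₂, hOF₁]
    simp [lemniscate, hX]
end

section
/- Let l be an affine line in the Euclidean plane, O a point not on l, and A the orthogonal projection of O onto l. Fix r > 0 and let A* be the image of A under inversion in the circle with center O and radius r. Then for every point B on l, the image B* of B under this inversion lies on the circle with diameter OA*; that is, dist B* (midpoint of O and A*) = dist O A* / 2. -/
/-!
The midpoint `M` of `O A*` lies at distance `r² / (2 · dist O A)` from `O` on the ray `OA`, so
inversion sends it to the reflection `O'` of `O` in `A`. Every point of `l` is equidistant from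
`O` and `O'`, i.e. `l` lies in the perpendicular bisector of `O O'`, and inversion maps that
bisector into the sphere through `O` centred at `M`, whose radius is `dist O A* / 2`.
-/

open EuclideanGeometry Real

namespace EuclideanGeometry

open AffineSubspace

variable {V P : Type*} [NormedAddCommGroup V] [InnerProductSpace ℝ V] [MetricSpace P]
  [NormedAddTorsor V P]

theorem inversion_midpoint_inversion {R : ℝ} (hR : R ≠ 0) (c x : P) :
    inversion c R (midpoint ℝ c (inversion c R x)) = Equiv.pointReflection x c := by
  rcases eq_or_ne x c with rfl | hx
  · simp
  have hd : dist x c ≠ 0 := dist_ne_zero.2 hx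
  have hm : dist (midpoint ℝ c (inversion c R x)) c = R ^ 2 / dist x c / 2 := by
    rw [dist_midpoint_left, dist_center_inversion, dist_comm]
    norm_num
    ring
  have hk : (R / (R ^ 2 / dist x c / 2)) ^ 2 * 2⁻¹ * (R / dist x c) ^ 2 = 2 := by
    field_simp
  rw [inversion, hm, midpoint_vsub_left, inversion_vsub_center, Equiv.pointReflection_apply,
    invOf_eq_inv, smul_smul, smul_smul, hk, two_smul, add_vadd, vsub_vadd]

theorem mem_perpBisector_pointReflection_orthogonalProjection (s : AffineSubspace ℝ P)
    [Nonempty s] [s.direction.HasOrthogonalProjection] (p : P) {q : P} (hq : q ∈ s) :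
    q ∈ perpBisector p (Equiv.pointReflection (orthogonalProjection s p : P) p) :=
  mem_perpBisector_pointReflection_iff_inner_eq_zero.2 <|
    Submodule.inner_right_of_mem_orthogonal
      (AffineSubspace.vsub_mem_direction hq (orthogonalProjection_mem p))
      (vsub_orthogonalProjection_mem_direction_orthogonal s p)

theorem dist_inversion_midpoint_inversion_orthogonalProjection (s : AffineSubspace ℝ P)
    [Nonempty s] [s.direction.HasOrthogonalProjection] {c p : P} (hc : c ∉ s) {R : ℝ}
    (hR : R ≠ 0) (hp : p ∈ s) :
    dist (inversion c R p) (midpoint ℝ c (inversion c R (orthogonalProjection s c))) =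
      dist c (inversion c R (orthogonalProjection s c)) / 2 := by
  set a : P := ↑(orthogonalProjection s c)
  have hac : a ≠ c := fun h => hc (h ▸ orthogonalProjection_mem c)
  have hpc : p ≠ c := fun h => hc (h ▸ hp)
  have hm : midpoint ℝ c (inversion c R a) ≠ c := by
    simpa [midpoint_eq_left_iff, eq_comm (a := c), inversion_eq_center hR] using hac
  have hradius : dist c (inversion c R a) / 2 = dist (midpoint ℝ c (inversion c R a)) c := by
    rw [dist_midpoint_left]
    norm_num
    ring
  rw [hradius, ← inversion_mem_perpBisector_inversion_iff hR
    ((inversion_eq_center hR).not.2 hpc) hm, inversion_inversion c hR,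
    inversion_midpoint_inversion hR]
  exact mem_perpBisector_pointReflection_orthogonalProjection s c hp

end EuclideanGeometry

theorem inversion_image_of_line_mem_circle_general
    (l : AffineSubspace ℝ (EuclideanSpace ℝ (Fin 2)))
    [Nonempty l] [Submodule.HasOrthogonalProjection l.direction]
    (O : EuclideanSpace ℝ (Fin 2)) (hO : O ∉ l)
    (r : ℝ) (hr : 0 < r)
    (A Astar B Bstar : EuclideanSpace ℝ (Fin 2))
    (hA : A = EuclideanGeometry.orthogonalProjection l O)
    (hAstar : Astar = EuclideanGeometry.inversion O r A)
    (hB : B ∈ l)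
    (hBstar : Bstar = EuclideanGeometry.inversion O r B) :
    dist Bstar (midpoint ℝ O Astar) = dist O Astar / 2 := by
  subst hA hAstar hBstar
  exact dist_inversion_midpoint_inversion_orthogonalProjection l hO hr.ne' hB

/-- The inversion image of a line `l` not through the center `O` of inversion lies on
the circle with diameter `OA*`, where `A*` is the inversion image of the orthogonal
projection `A` of `O` onto `l`. -/
theorem inversion_image_of_line_mem_circle
    (l : AffineSubspace ℝ (EuclideanSpace ℝ (Fin 2)))
    [Nonempty l] [Submodule.HasOrthogonalProjection l.direction]
    (hline : Module.finrank ℝ l.direction = 1)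
    (O : EuclideanSpace ℝ (Fin 2)) (hO : O ∉ l)
    (r : ℝ) (hr : 0 < r)
    (A Astar B Bstar : EuclideanSpace ℝ (Fin 2))
    (hA : A = EuclideanGeometry.orthogonalProjection l O)
    (hAstar : Astar = EuclideanGeometry.inversion O r A)
    (hB : B ∈ l)
    (hBstar : Bstar = EuclideanGeometry.inversion O r B) :
    dist Bstar (midpoint ℝ O Astar) = dist O Astar / 2 :=
  inversion_image_of_line_mem_circle_general l O hO r hr A Astar B Bstar hA hAstar hB hBstar
end

section
/- Let l be an affine line in the Euclidean plane, O a point not on l, and A the orthogonal projection of O onto l. Fix r > 0. Let O₁ be the reflection of O across the line l, and let A* be the image of A under inversion in the circle with center O and radius r. Then the image of O₁ under this inversion equals the midpoint of O and A*, i.e. the center of the circle with diameter OA*. -/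
/-!
Inversion about `O` turns a homothety of ratio `k` about `O` into one of ratio `k⁻¹`. The
reflection of `O` across `l` is the image of `A` under the homothety of ratio `2` about `O`, so
its inverse is the image of `A*` under the homothety of ratio `1/2` about `O`, i.e. the midpoint.
-/

open EuclideanGeometry AffineMap

namespace EuclideanGeometry

theorem reflection_eq_homothety_orthogonalProjection {𝕜 V P : Type*} [RCLike 𝕜]
    [NormedAddCommGroup V] [InnerProductSpace 𝕜 V] [MetricSpace P] [NormedAddTorsor V P]
    (s : AffineSubspace 𝕜 P) [Nonempty s] [s.direction.HasOrthogonalProjection] (p : P) :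
    reflection s p = homothety p (2 : 𝕜) (orthogonalProjection s p : P) := by
  rw [reflection_apply', homothety_apply, two_smul, add_vadd, vsub_vadd, ← neg_vsub_eq_vsub_rev]

theorem inversion_homothety {V P : Type*} [NormedAddCommGroup V] [InnerProductSpace ℝ V]
    [MetricSpace P] [NormedAddTorsor V P] (c : P) (R k : ℝ) (x : P) :
    inversion c R (homothety c k x) = homothety c k⁻¹ (inversion c R x) := by
  simp only [inversion, homothety_apply, vadd_vsub, dist_eq_norm_vsub V, norm_smul,
    Real.norm_eq_abs, smul_smul]
  congr 2
  rcases eq_or_ne k 0 with rfl | hk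
  · simp
  rw [div_mul_eq_div_div_swap, div_pow, sq_abs]
  field_simp

end EuclideanGeometry

theorem inversion_of_reflection_eq_center_general
    (l : AffineSubspace ℝ (EuclideanSpace ℝ (Fin 2)))
    [Nonempty l] [Submodule.HasOrthogonalProjection l.direction]
    (O : EuclideanSpace ℝ (Fin 2))
    (r : ℝ)
    (A Astar O₁ : EuclideanSpace ℝ (Fin 2))
    (hA : A = EuclideanGeometry.orthogonalProjection l O)
    (hAstar : Astar = EuclideanGeometry.inversion O r A)
    (hO₁ : O₁ = EuclideanGeometry.reflection l O) :
    EuclideanGeometry.inversion O r O₁ = midpoint ℝ O Astar := by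
  rw [hO₁, reflection_eq_homothety_orthogonalProjection, inversion_homothety, ← hA, ← hAstar,
    ← homothety_inv_two]

/-- The center of the circle with diameter `OA*` (the inversion image of a line `l`
not through `O`, where `A*` is the inversion image of the projection `A` of `O` onto
`l`) is the inversion image of the reflection `O₁` of `O` across `l`. -/
theorem inversion_of_reflection_eq_center
    (l : AffineSubspace ℝ (EuclideanSpace ℝ (Fin 2)))
    [Nonempty l] [Submodule.HasOrthogonalProjection l.direction]
    (hline : Module.finrank ℝ l.direction = 1)
    (O : EuclideanSpace ℝ (Fin 2)) (hO : O ∉ l)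
    (r : ℝ) (hr : 0 < r)
    (A Astar O₁ : EuclideanSpace ℝ (Fin 2))
    (hA : A = EuclideanGeometry.orthogonalProjection l O)
    (hAstar : Astar = EuclideanGeometry.inversion O r A)
    (hO₁ : O₁ = EuclideanGeometry.reflection l O) :
    EuclideanGeometry.inversion O r O₁ = midpoint ℝ O Astar :=
  inversion_of_reflection_eq_center_general l O r A Astar O₁ hA hAstar hO₁
end

section
/- Let F₁ ≠ F₂ be points in the Euclidean plane and let A, B, X form a linkage configuration (dist F₁ A = dist F₂ B = dist F₁ F₂ / √2, dist A B = dist F₁ F₂, A and B strictly on opposite sides of line F₁F₂, X the midpoint of AB). Suppose the lines F₁A and F₂B meet in a point P. Then the four points P, F₁, X, F₂ are concyclic (the quadrilateral PF₁XF₂ is inscribed in a circle). -/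
open EuclideanGeometry Real

/-!
Put `u = A - F₁`, `v = B - F₂`, `w = F₂ - F₁`. The quadrilateral `F₁F₂BA` has equal opposite
sides, and as `A`, `B` lie on opposite sides of `F₁F₂` it is not a parallelogram: `u ≠ v`.
Writing `P = F₁ + t u = F₂ + s v`, the inner product with `u - v` gives `t + s = 1`. Hence
`2ts (X - F₁) = (P - F₁) - t² w`, and the side lengths `|w| / √2` give the same relation
`2ts |X - F₁|² = |P - F₁|² - t² |w|²` between squared lengths. For any point `c`, the quantity
`|Y - c|² - |F₁ - c|²` is an affine function of the pair `(Y - F₁, |Y - F₁|²)`; it vanishes at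
`F₂` and `P` when `c` is the circumcenter of `F₁F₂P`, so it vanishes at `X` as well.
-/

section Affine

variable {k V P : Type*} [DivisionRing k] [AddCommGroup V] [Module k V] [AddTorsor V P]

theorem mem_of_mem_affineSpan_pair_of_ne {s : AffineSubspace k P} {p q a : P} (hp : p ∈ s)
    (hq : q ∈ s) (hqp : q ≠ p) (h : q ∈ line[k, p, a]) : a ∈ s := by
  have hcol : Collinear k {q, p, a} := collinear_insert_of_mem_affineSpan_pair h
  exact affineSpan_pair_le_of_mem_of_mem hp hq <|
    hcol.mem_affineSpan_of_mem_of_ne (by simp) (by simp) (by simp) hqp.symm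

theorem not_collinear_of_mem_affineSpan_pair {p₁ p₂ a b q : P} (h₁₂ : p₁ ≠ p₂)
    (ha : a ∉ line[k, p₁, p₂]) (hb : b ∉ line[k, p₁, p₂]) (hq₁ : q ∈ line[k, p₁, a])
    (hq₂ : q ∈ line[k, p₂, b]) : ¬Collinear k {p₁, p₂, q} := by
  intro hcol
  have hq : q ∈ line[k, p₁, p₂] :=
    hcol.mem_affineSpan_of_mem_of_ne (by simp) (by simp) (by simp) h₁₂
  by_cases hqp₁ : q = p₁
  · exact hb <| mem_of_mem_affineSpan_pair_of_ne (right_mem_affineSpan_pair k p₁ p₂) hq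
      (hqp₁ ▸ h₁₂) hq₂
  · exact ha <| mem_of_mem_affineSpan_pair_of_ne (left_mem_affineSpan_pair k p₁ p₂) hq hqp₁ hq₁

end Affine

theorem vsub_ne_vsub_of_sOppSide {R V P : Type*} [Field R] [LinearOrder R]
    [IsStrictOrderedRing R] [AddCommGroup V] [Module R V] [AddTorsor V P] {p₁ p₂ x y : P}
    (h : line[R, p₁, p₂].SOppSide x y) : x -ᵥ p₁ ≠ y -ᵥ p₂ := by
  intro hxy
  have hy : y = (p₂ -ᵥ p₁) +ᵥ x := by
    rw [eq_vadd_iff_vsub_eq, ← vsub_sub_vsub_cancel_right y x p₁,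
      ← vsub_add_vsub_cancel y p₂ p₁, ← hxy, add_sub_cancel_left]
  have hdir : p₂ -ᵥ p₁ ∈ line[R, p₁, p₂].direction :=
    AffineSubspace.vsub_mem_direction (right_mem_affineSpan_pair R p₁ p₂)
      (left_mem_affineSpan_pair R p₁ p₂)
  exact AffineSubspace.not_sOppSide_self _ x <|
    (AffineSubspace.sOppSide_vadd_right_iff hdir).mp (hy ▸ h)

theorem two_mul_sq_eq_of_eq_div_sqrt_two {a b : ℝ} (h : a = b / √2) : 2 * a ^ 2 = b ^ 2 := by
  rw [h, div_pow, sq_sqrt zero_le_two]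
  ring

section Euclidean

variable {V P : Type*} [NormedAddCommGroup V] [InnerProductSpace ℝ V] [MetricSpace P]
  [NormedAddTorsor V P]

theorem add_eq_one_of_smul_eq_add_smul {u v w : V} {t s : ℝ} (huv : u ≠ v) (hnorm : ‖u‖ = ‖v‖)
    (hw : ‖w + v - u‖ = ‖w‖) (h : t • u = w + s • v) : t + s = 1 := by
  have hdot := congrArg (fun x => inner ℝ x (u - v)) h
  have hw2 := congrArg (· ^ 2) hw
  simp only [inner_add_left, inner_smul_left, inner_sub_right, real_inner_self_eq_norm_sq,
    RCLike.conj_to_real, real_inner_comm u v] at hdot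
  rw [add_sub_assoc, ← neg_sub u v, ← sub_eq_add_neg, norm_sub_sq_real, norm_sub_sq_real,
    inner_sub_right] at hw2
  have hprod : (t + s - 1) * ‖u - v‖ ^ 2 = 0 := by
    rw [norm_sub_sq_real]
    linear_combination 2 * hdot - hw2 + (s - t) * congrArg (· ^ 2) hnorm
  have huv' : ‖u - v‖ ^ 2 ≠ 0 := by simpa [sub_eq_zero] using huv
  linear_combination (mul_eq_zero.mp hprod).resolve_right huv'

theorem mul_norm_add_add_sq_add_mul_norm_sq_eq_zero {u v w : V} {t s : ℝ}
    (hu : 2 * ‖u‖ ^ 2 = ‖w‖ ^ 2) (hv : 2 * ‖v‖ ^ 2 = ‖w‖ ^ 2) (hw : ‖w + v - u‖ = ‖w‖)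
    (h : t • u = w + s • v) (hst : t + s = 1) : s * ‖u + v + w‖ ^ 2 + t * ‖w‖ ^ 2 = 0 := by
  have hnorm := congrArg (‖·‖ ^ 2) h
  have hw2 := congrArg (· ^ 2) hw
  simp only [norm_smul, mul_pow, Real.norm_eq_abs, sq_abs, norm_add_sq_real,
    inner_smul_right] at hnorm
  rw [norm_sub_sq_real, norm_add_sq_real, inner_add_left, real_inner_comm u v] at hw2
  rw [norm_add_sq_real, norm_add_sq_real, inner_add_left, real_inner_comm w v,
    real_inner_comm w u]
  obtain rfl : s = 1 - t := by linear_combination hst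
  linear_combination -(1 - t) * hw2 - 2 * hnorm + (t ^ 2 + 1 - t) * hu + t * (1 - t) * hv

theorem dist_eq_of_smul_vsub_eq_add {c O Q R Y : P} {α β γ : ℝ} (hγ : γ ≠ 0)
    (hQ : dist Q c = dist O c) (hR : dist R c = dist O c)
    (hY : γ • (Y -ᵥ O) = α • (Q -ᵥ O) + β • (R -ᵥ O))
    (hn : γ * ‖Y -ᵥ O‖ ^ 2 = α * ‖Q -ᵥ O‖ ^ 2 + β * ‖R -ᵥ O‖ ^ 2) :
    dist Y c = dist O c := by
  have hdist (Z : P) :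
      dist Z c ^ 2 = ‖Z -ᵥ O‖ ^ 2 - 2 * inner ℝ (Z -ᵥ O) (c -ᵥ O) + dist O c ^ 2 := by
    rw [dist_eq_norm_vsub V, dist_comm, dist_eq_norm_vsub V,
      ← vsub_sub_vsub_cancel_right Z c O, norm_sub_sq_real]
  have hinner := congrArg (inner ℝ · (c -ᵥ O)) hY
  simp only [inner_add_left, inner_smul_left, RCLike.conj_to_real] at hinner
  have hsq : γ * (dist Y c ^ 2 - dist O c ^ 2) = 0 := by
    linear_combination hdist Y * γ - α * (hdist Q) - β * (hdist R) + α * congrArg (· ^ 2) hQ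
      + β * congrArg (· ^ 2) hR + hn - 2 * hinner
  have hsq' : dist Y c ^ 2 = dist O c ^ 2 := by
    linear_combination (mul_eq_zero.mp hsq).resolve_left hγ
  exact (pow_left_inj₀ dist_nonneg dist_nonneg two_ne_zero).mp hsq'

theorem cospherical_insert_of_smul_vsub_eq {O Q R Y : P} {α β γ : ℝ}
    (h : ¬Collinear ℝ {O, Q, R}) (hγ : γ ≠ 0)
    (hY : γ • (Y -ᵥ O) = α • (Q -ᵥ O) + β • (R -ᵥ O))
    (hn : γ * ‖Y -ᵥ O‖ ^ 2 = α * ‖Q -ᵥ O‖ ^ 2 + β * ‖R -ᵥ O‖ ^ 2) :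
    Cospherical ({Y, O, Q, R} : Set P) := by
  let T : Affine.Triangle ℝ P := ⟨![O, Q, R], affineIndependent_iff_not_collinear_set.mpr h⟩
  have hT (i : Fin 3) : dist (T.points i) T.circumcenter = dist O T.circumcenter :=
    (T.dist_circumcenter_eq_circumradius i).trans (T.dist_circumcenter_eq_circumradius 0).symm
  refine ⟨T.circumcenter, dist O T.circumcenter, ?_⟩
  simp only [Set.mem_insert_iff, Set.mem_singleton_iff]
  rintro p (rfl | rfl | rfl | rfl)
  · exact dist_eq_of_smul_vsub_eq_add hγ (hT 1) (hT 2) hY hn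
  · rfl
  · exact hT 1
  · exact hT 2


theorem cospherical_midpoint_of_lineMap_eq {F₁ F₂ A B Q : P} {t s : ℝ}
    (hnc : ¬Collinear ℝ {F₁, F₂, Q}) (hpar : A -ᵥ F₁ ≠ B -ᵥ F₂)
    (hA : 2 * dist F₁ A ^ 2 = dist F₁ F₂ ^ 2) (hB : 2 * dist F₂ B ^ 2 = dist F₁ F₂ ^ 2)
    (hAB : dist A B = dist F₁ F₂) (ht : AffineMap.lineMap F₁ A t = Q)
    (hs : AffineMap.lineMap F₂ B s = Q) :
    Cospherical ({midpoint ℝ A B, F₁, F₂, Q} : Set P) := by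
  set u := A -ᵥ F₁
  set v := B -ᵥ F₂
  set w := F₂ -ᵥ F₁
  have hQu : Q -ᵥ F₁ = t • u := by rw [← ht, AffineMap.lineMap_vsub_left]
  have hts : t • u = w + s • v := by
    rw [← hQu, ← AffineMap.lineMap_vsub_left F₂ B s, hs, add_comm, vsub_add_vsub_cancel]
  have hM : midpoint ℝ A B -ᵥ F₁ = (2 : ℝ)⁻¹ • (u + v + w) := by
    rw [midpoint_vsub, invOf_eq_inv, ← vsub_add_vsub_cancel B F₂ F₁]
    module
  have hu : 2 * ‖u‖ ^ 2 = ‖w‖ ^ 2 := by rwa [← dist_eq_norm_vsub', ← dist_eq_norm_vsub']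
  have hv : 2 * ‖v‖ ^ 2 = ‖w‖ ^ 2 := by rwa [← dist_eq_norm_vsub', ← dist_eq_norm_vsub']
  have hw : ‖w + v - u‖ = ‖w‖ := by
    rwa [add_comm, vsub_add_vsub_cancel, vsub_sub_vsub_cancel_right, ← dist_eq_norm_vsub',
      ← dist_eq_norm_vsub']
  have hnorm : ‖u‖ = ‖v‖ :=
    (pow_left_inj₀ (norm_nonneg u) (norm_nonneg v) two_ne_zero).mp (by linarith)
  have hst : t + s = 1 := add_eq_one_of_smul_eq_add_smul hpar hnorm hw hts
  have ht0 : t ≠ 0 := by rintro rfl; simp [← ht, collinear_pair] at hnc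
  have hs0 : s ≠ 0 := by rintro rfl; simp [← hs, collinear_pair] at hnc
  refine cospherical_insert_of_smul_vsub_eq hnc (γ := 2 * t * s) (α := -t ^ 2) (β := 1)
    (by positivity) ?_ ?_
  · rw [hM, hQu]
    linear_combination (norm := module) (-t) • hts + hst • (t • (u + w))
  · rw [hM, hQu, norm_smul, norm_smul, mul_pow, mul_pow, Real.norm_eq_abs, Real.norm_eq_abs,
      sq_abs, sq_abs]
    linear_combination (t / 2) * mul_norm_add_add_sq_add_mul_norm_sq_eq_zero hu hv hw hts hst
      - (t ^ 2 / 2) * hu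

end Euclidean

/-- In the linkage configuration, if the lines `F₁A` and `F₂B` meet at `P`, then the
quadrilateral `PF₁XF₂` is inscribed in a circle: `P`, `F₁`, `X`, `F₂` are concyclic. -/
theorem linkage_concyclic
    (F₁ F₂ A B X P : EuclideanSpace ℝ (Fin 2))
    (hF : F₁ ≠ F₂)
    (hA : dist F₁ A = dist F₁ F₂ / Real.sqrt 2)
    (hB : dist F₂ B = dist F₁ F₂ / Real.sqrt 2)
    (hAB : dist A B = dist F₁ F₂)
    (hSide : (affineSpan ℝ ({F₁, F₂} : Set (EuclideanSpace ℝ (Fin 2)))).SOppSide A B)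
    (hX : X = midpoint ℝ A B)
    (hP₁ : P ∈ affineSpan ℝ ({F₁, A} : Set (EuclideanSpace ℝ (Fin 2))))
    (hP₂ : P ∈ affineSpan ℝ ({F₂, B} : Set (EuclideanSpace ℝ (Fin 2)))) :
    EuclideanGeometry.Concyclic ({P, F₁, X, F₂} : Set (EuclideanSpace ℝ (Fin 2))) := by
  obtain ⟨t, ht⟩ := mem_affineSpan_pair_iff_exists_lineMap_eq.mp hP₁
  obtain ⟨s, hs⟩ := mem_affineSpan_pair_iff_exists_lineMap_eq.mp hP₂
  have hnc : ¬Collinear ℝ {F₁, F₂, P} :=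
    not_collinear_of_mem_affineSpan_pair hF hSide.left_notMem hSide.right_notMem hP₁ hP₂
  have hcos := cospherical_midpoint_of_lineMap_eq hnc (vsub_ne_vsub_of_sOppSide hSide)
    (two_mul_sq_eq_of_eq_div_sqrt_two hA) (two_mul_sq_eq_of_eq_div_sqrt_two hB) hAB ht hs
  refine ⟨hcos.subset ?_, coplanar_of_finrank_eq_two _ finrank_euclideanSpace_fin⟩
  intro Z
  simp only [hX, Set.mem_insert_iff, Set.mem_singleton_iff]
  tauto
end

section
/- Let F₁ ≠ F₂ be points in the Euclidean plane, O the midpoint of F₁F₂, and let A, B, X form a linkage configuration (dist F₁ A = dist F₂ B = dist F₁ F₂ / √2, dist A B = dist F₁ F₂, A and B strictly on opposite sides of line F₁F₂, X the midpoint of AB). Suppose the lines F₁A and F₂B meet in a point P. Then dist P X = dist P O; that is, the points X and O lie on a common circle centered at P. -/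
open EuclideanGeometry

/-!
The hypotheses make `F₁ F₂ B A` an antiparallelogram (`F₁A = F₂B`, `F₁F₂ = AB`), and it is not a
parallelogram because `A` and `B` lie on opposite sides of `F₁F₂`. Writing
`P = F₁ + t (A - F₁) = F₂ + s (B - F₂)`, these two facts force `t + s = 1`, so `PF₁ = PB` and
`PA = PF₂`. The triangles `P F₁ F₂` and `P B A` are therefore congruent, and by Apollonius'
theorem so are their medians `PO` and `PX`.
-/

section

variable {V Pt : Type*} [NormedAddCommGroup V] [InnerProductSpace ℝ V] [MetricSpace Pt]
  [NormedAddTorsor V Pt]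

theorem add_eq_one_of_smul_sub_smul_eq {u v w : V} {t s : ℝ} (huv : ‖u‖ = ‖v‖)
    (hw : ‖u - v - w‖ = ‖w‖) (hne : u ≠ v) (h : t • u - s • v = w) : t + s = 1 := by
  have hd : ‖u - v‖ ^ 2 ≠ 0 := pow_ne_zero 2 (norm_ne_zero_iff.mpr (sub_ne_zero.mpr hne))
  have hdw : 2 * inner ℝ (u - v) w = ‖u - v‖ ^ 2 := by
    have := norm_sub_sq_real (u - v) w
    rw [hw] at this
    linarith
  -- `‖u‖ = ‖v‖` makes `u - v` orthogonal to `u + v`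
  have hdu : inner ℝ (u - v) u = ‖u - v‖ ^ 2 / 2 := by
    rw [norm_sub_sq_real, inner_sub_left, real_inner_self_eq_norm_sq, real_inner_comm, huv]
    ring
  have hdv : inner ℝ (u - v) v = -(‖u - v‖ ^ 2 / 2) := by
    rw [norm_sub_sq_real, inner_sub_left, real_inner_self_eq_norm_sq, huv]
    ring
  rw [← h, inner_sub_right, inner_smul_right, inner_smul_right, hdu, hdv] at hdw
  exact mul_right_cancel₀ hd (by linarith)

theorem AffineSubspace.SOppSide.vsub_ne_vsub {s : AffineSubspace ℝ Pt} {x y p q : Pt}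
    (h : s.SOppSide x y) (hp : p ∈ s) (hq : q ∈ s) : x -ᵥ p ≠ y -ᵥ q := by
  intro hxy
  have hx : x = (p -ᵥ q) +ᵥ y := by
    rw [vsub_vadd_comm, ← hxy, vsub_vadd]
  rw [hx, AffineSubspace.sOppSide_vadd_left_iff (AffineSubspace.vsub_mem_direction hp hq)] at h
  exact s.not_sOppSide_self y h

theorem dist_eq_of_mem_affineSpan_pair_of_dist_eq {F₁ F₂ A B P : Pt}
    (hA : dist F₁ A = dist F₂ B) (hAB : dist A B = dist F₁ F₂) (hne : A -ᵥ F₁ ≠ B -ᵥ F₂)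
    (hP₁ : P ∈ line[ℝ, F₁, A]) (hP₂ : P ∈ line[ℝ, F₂, B]) :
    dist P F₁ = dist P B ∧ dist P A = dist P F₂ := by
  obtain ⟨t, rfl⟩ := mem_affineSpan_pair_iff_exists_lineMap_eq.mp hP₁
  obtain ⟨s, hs⟩ := mem_affineSpan_pair_iff_exists_lineMap_eq.mp hP₂
  have hts : t + s = 1 := by
    refine add_eq_one_of_smul_sub_smul_eq (w := F₂ -ᵥ F₁) ?_ ?_ hne ?_
    · rw [← dist_eq_norm_vsub', ← dist_eq_norm_vsub', hA]
    · rw [← dist_eq_norm_vsub', sub_sub, vsub_add_vsub_cancel, vsub_sub_vsub_cancel_right,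
        ← dist_eq_norm_vsub, hAB]
    · rw [← AffineMap.lineMap_vsub_left, ← AffineMap.lineMap_vsub_left, hs,
        vsub_sub_vsub_cancel_left]
  constructor
  · rw [dist_lineMap_left, ← hs, dist_lineMap_right, hA, show 1 - s = t by linarith]
  · rw [dist_lineMap_right, ← hs, dist_lineMap_left, hA, show 1 - t = s by linarith]

theorem dist_midpoint_eq_of_dist_eq {p a b q c d : Pt} (hac : dist p a = dist q c)
    (hbd : dist p b = dist q d) (hab : dist a b = dist c d) :
    dist p (midpoint ℝ a b) = dist q (midpoint ℝ c d) := by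
  have h₁ := dist_sq_add_dist_sq_eq_two_mul_dist_midpoint_sq_add_half_dist_sq p a b
  have h₂ := dist_sq_add_dist_sq_eq_two_mul_dist_midpoint_sq_add_half_dist_sq q c d
  rw [hac, hbd, hab, h₂] at h₁
  exact (pow_left_inj₀ dist_nonneg dist_nonneg two_ne_zero).mp (by linarith)

end

theorem linkage_dist_P_X_eq_dist_P_O_general
    (F₁ F₂ A B X O P : EuclideanSpace ℝ (Fin 2))
    (hO : O = midpoint ℝ F₁ F₂)
    (hA : dist F₁ A = dist F₁ F₂ / Real.sqrt 2)
    (hB : dist F₂ B = dist F₁ F₂ / Real.sqrt 2)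
    (hAB : dist A B = dist F₁ F₂)
    (hSide : (affineSpan ℝ ({F₁, F₂} : Set (EuclideanSpace ℝ (Fin 2)))).SOppSide A B)
    (hX : X = midpoint ℝ A B)
    (hP₁ : P ∈ affineSpan ℝ ({F₁, A} : Set (EuclideanSpace ℝ (Fin 2))))
    (hP₂ : P ∈ affineSpan ℝ ({F₂, B} : Set (EuclideanSpace ℝ (Fin 2)))) :
    dist P X = dist P O := by
  subst hO hX
  have hne : A -ᵥ F₁ ≠ B -ᵥ F₂ :=
    hSide.vsub_ne_vsub (left_mem_affineSpan_pair ℝ F₁ F₂) (right_mem_affineSpan_pair ℝ F₁ F₂)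
  obtain ⟨hPF₁, hPF₂⟩ :=
    dist_eq_of_mem_affineSpan_pair_of_dist_eq (hA.trans hB.symm) hAB hne hP₁ hP₂
  rw [midpoint_comm]
  exact dist_midpoint_eq_of_dist_eq hPF₁.symm hPF₂ (by rw [dist_comm, hAB])

/-- In the linkage configuration, if the lines `F₁A` and `F₂B` meet at `P`, then `X`
and `O` lie on a common circle centered at `P`: `dist P X = dist P O`. -/
theorem linkage_dist_P_X_eq_dist_P_O
    (F₁ F₂ A B X O P : EuclideanSpace ℝ (Fin 2))
    (hF : F₁ ≠ F₂)
    (hO : O = midpoint ℝ F₁ F₂)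
    (hA : dist F₁ A = dist F₁ F₂ / Real.sqrt 2)
    (hB : dist F₂ B = dist F₁ F₂ / Real.sqrt 2)
    (hAB : dist A B = dist F₁ F₂)
    (hSide : (affineSpan ℝ ({F₁, F₂} : Set (EuclideanSpace ℝ (Fin 2)))).SOppSide A B)
    (hX : X = midpoint ℝ A B)
    (hP₁ : P ∈ affineSpan ℝ ({F₁, A} : Set (EuclideanSpace ℝ (Fin 2))))
    (hP₂ : P ∈ affineSpan ℝ ({F₂, B} : Set (EuclideanSpace ℝ (Fin 2)))) :
    dist P X = dist P O :=
  linkage_dist_P_X_eq_dist_P_O_general F₁ F₂ A B X O P hO hA hB hAB hSide hX hP₁ hP₂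
end

section
/- Let F₁ ≠ F₂ be points in the Euclidean plane, O the midpoint of F₁F₂, and let A, B, X form a linkage configuration (dist F₁ A = dist F₂ B = dist F₁ F₂ / √2, dist A B = dist F₁ F₂, A and B strictly on opposite sides of line F₁F₂, X the midpoint of AB) with X ≠ O. Suppose the lines F₁A and F₂B meet in a point P with P ≠ O. Then the oriented angles satisfy ∡ X O P = 2 • ∡ F₁ O P (as elements of Real.Angle); moreover, since dist P X = dist P O, the base angles of the isosceles triangle XPO are equal: ∠ P X O = ∠ X O P as unsigned angles. -/
open EuclideanGeometry Real

open scoped RealInnerProductSpace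

instance : Fact (Module.finrank ℝ (EuclideanSpace ℝ (Fin 2)) = 2) :=
  ⟨finrank_euclideanSpace_fin⟩

private lemma sameRay_real_mul_nonneg {x y : ℝ} (h : SameRay ℝ x y) : 0 ≤ x * y := by
  rcases h with h | h | ⟨r₁, r₂, hr₁, hr₂, h⟩
  · simp [h]
  · simp [h]
  · have hx : r₁ * x = r₂ * y := by simpa [smul_eq_mul] using h
    have h' : r₁ * (x * y) = r₂ * y ^ 2 := by linear_combination y * hx
    have h2 : 0 ≤ r₁ * (x * y) := by rw [h']; positivity
    have h3 := div_nonneg h2 hr₁.le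
    rwa [mul_div_cancel_left₀ _ hr₁.ne'] at h3

set_option maxHeartbeats 1600000

/-- In the (oriented) linkage configuration, the oriented angle `∡ X O P` is twice
the oriented angle `∡ F₁ O P`; moreover the isosceles triangle `XPO` (with
`|PX| = |PO|`) has equal base angles `∠ P X O = ∠ X O P`. -/
theorem linkage_oangle_double
    [Module.Oriented ℝ (EuclideanSpace ℝ (Fin 2)) (Fin 2)]
    (F₁ F₂ A B X O P : EuclideanSpace ℝ (Fin 2))
    (hF : F₁ ≠ F₂)
    (hO : O = midpoint ℝ F₁ F₂)
    (hA : dist F₁ A = dist F₁ F₂ / Real.sqrt 2)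
    (hB : dist F₂ B = dist F₁ F₂ / Real.sqrt 2)
    (hAB : dist A B = dist F₁ F₂)
    (hSide : (affineSpan ℝ ({F₁, F₂} : Set (EuclideanSpace ℝ (Fin 2)))).SOppSide A B)
    (hX : X = midpoint ℝ A B)
    (hXO : X ≠ O)
    (hP₁ : P ∈ affineSpan ℝ ({F₁, A} : Set (EuclideanSpace ℝ (Fin 2))))
    (hP₂ : P ∈ affineSpan ℝ ({F₂, B} : Set (EuclideanSpace ℝ (Fin 2))))
    (hPO : P ≠ O) :
    ∡ X O P = (2 : ℤ) • ∡ F₁ O P ∧ ∠ P X O = ∠ X O P := by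
  set ori : Orientation ℝ (EuclideanSpace ℝ (Fin 2)) (Fin 2) := Module.Oriented.positiveOrientation with hori
  set u : (EuclideanSpace ℝ (Fin 2)) := F₂ -ᵥ F₁ with hu_def
  have hu : u ≠ 0 := vsub_ne_zero.mpr hF.symm
  set N : ℝ := ‖u‖ ^ 2 with hN_def
  have hN : 0 < N := by
    have : 0 < ‖u‖ := norm_pos_iff.mpr hu
    positivity
  have hdF : dist F₁ F₂ = ‖u‖ := by
    rw [dist_comm, dist_eq_norm_vsub (EuclideanSpace ℝ (Fin 2))]
  -- coordinates
  set a1 : ℝ := ⟪u, A -ᵥ F₁⟫ with ha1_def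
  set a2 : ℝ := ori.areaForm u (A -ᵥ F₁) with ha2_def
  set b1 : ℝ := ⟪u, B -ᵥ F₂⟫ with hb1_def
  set b2 : ℝ := ori.areaForm u (B -ᵥ F₂) with hb2_def
  -- constraint H1
  have sqrt2 : Real.sqrt 2 ^ 2 = 2 := Real.sq_sqrt (by norm_num)
  have hnA : ‖A -ᵥ F₁‖ ^ 2 = N / 2 := by
    have h : ‖A -ᵥ F₁‖ = ‖u‖ / Real.sqrt 2 := by
      rw [← dist_eq_norm_vsub (EuclideanSpace ℝ (Fin 2)), dist_comm, hA, hdF]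
    rw [h, div_pow, sqrt2, hN_def]
  have h1 : a1 ^ 2 + a2 ^ 2 = N ^ 2 / 2 := by
    have := ori.inner_sq_add_areaForm_sq u (A -ᵥ F₁)
    rw [← ha1_def, ← ha2_def, hnA, ← hN_def] at this
    rw [this]; ring
  have hnB : ‖B -ᵥ F₂‖ ^ 2 = N / 2 := by
    have h : ‖B -ᵥ F₂‖ = ‖u‖ / Real.sqrt 2 := by
      rw [← dist_eq_norm_vsub (EuclideanSpace ℝ (Fin 2)), dist_comm, hB, hdF]
    rw [h, div_pow, sqrt2, hN_def]
  have h2 : b1 ^ 2 + b2 ^ 2 = N ^ 2 / 2 := by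
    have := ori.inner_sq_add_areaForm_sq u (B -ᵥ F₂)
    rw [← hb1_def, ← hb2_def, hnB, ← hN_def] at this
    rw [this]; ring
  -- constraint H3
  have hv : B -ᵥ A = ((B -ᵥ F₂) + u) - (A -ᵥ F₁) := by
    rw [hu_def]
    simp only [vsub_eq_sub]
    abel
  have hv1 : ⟪u, B -ᵥ A⟫ = b1 + N - a1 := by
    rw [hv, inner_sub_right, inner_add_right, real_inner_self_eq_norm_sq,
      ← ha1_def, ← hb1_def, ← hN_def]
  have hv2 : ori.areaForm u (B -ᵥ A) = b2 - a2 := by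
    rw [hv, map_sub, map_add, Orientation.areaForm_apply_self,
      ← ha2_def, ← hb2_def, add_zero]
  have hnAB : ‖B -ᵥ A‖ ^ 2 = N := by
    have h : ‖B -ᵥ A‖ = ‖u‖ := by
      rw [← dist_eq_norm_vsub (EuclideanSpace ℝ (Fin 2)), dist_comm, hAB, hdF]
    rw [h, hN_def]
  have h3 : (b1 + N - a1) ^ 2 + (b2 - a2) ^ 2 = N ^ 2 := by
    have := ori.inner_sq_add_areaForm_sq u (B -ᵥ A)
    rw [hv1, hv2, hnAB, ← hN_def] at this
    rw [this]; ring
  -- parameters on the two lines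
  obtain ⟨rA, hrA⟩ : ∃ r : ℝ, r • (A -ᵥ F₁) = P -ᵥ F₁ := by
    rw [← vsub_vadd P F₁] at hP₁
    exact vadd_left_mem_affineSpan_pair.mp hP₁
  obtain ⟨tB, htB⟩ : ∃ r : ℝ, r • (B -ᵥ F₂) = P -ᵥ F₂ := by
    rw [← vsub_vadd P F₂] at hP₂
    exact vadd_left_mem_affineSpan_pair.mp hP₂
  have hFO : F₁ -ᵥ O = (-(1 / 2) : ℝ) • u := by
    rw [hO, left_vsub_midpoint, hu_def, ← neg_vsub_eq_vsub_rev]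
    rw [smul_neg, ← neg_smul]
    norm_num
  have hF2O : F₂ -ᵥ O = ((1 : ℝ) / 2) • u := by
    rw [hO, right_vsub_midpoint, hu_def]
    norm_num
  have hPOvec : P -ᵥ O = rA • (A -ᵥ F₁) + (-(1 / 2) : ℝ) • u := by
    rw [← vsub_add_vsub_cancel P F₁ O, ← hrA, hFO]
  have hPOvec' : P -ᵥ O = tB • (B -ᵥ F₂) + ((1 : ℝ) / 2) • u := by
    rw [← vsub_add_vsub_cancel P F₂ O, ← htB, hF2O]
  set p1 : ℝ := ⟪u, P -ᵥ O⟫ with hp1_def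
  set p2 : ℝ := ori.areaForm u (P -ᵥ O) with hp2_def
  have hp1 : p1 = rA * a1 - N / 2 := by
    rw [hp1_def, hPOvec, inner_add_right, real_inner_smul_right, real_inner_smul_right,
      real_inner_self_eq_norm_sq, ← ha1_def, ← hN_def]
    ring
  have hp2 : p2 = rA * a2 := by
    rw [hp2_def, hPOvec, map_add, map_smul, map_smul, Orientation.areaForm_apply_self,
      ← ha2_def]
    simp
  have hp1' : p1 = tB * b1 + N / 2 := by
    rw [hp1_def, hPOvec', inner_add_right, real_inner_smul_right, real_inner_smul_right,
      real_inner_self_eq_norm_sq, ← hb1_def, ← hN_def]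
    ring
  have hp2' : p2 = tB * b2 := by
    rw [hp2_def, hPOvec', map_add, map_smul, map_smul, Orientation.areaForm_apply_self,
      ← hb2_def]
    simp
  have h4 : rA * a1 - N / 2 = tB * b1 + N / 2 := by rw [← hp1, hp1']
  have h5 : rA * a2 = tB * b2 := by rw [← hp2, hp2']
  have h45 : rA * (a1 * b2 - a2 * b1) = N * b2 := by linear_combination b2 * h4 - b1 * h5
  -- coordinates of X - O
  have hXOvec : X -ᵥ O = ((1 : ℝ) / 2) • ((A -ᵥ F₁) + (B -ᵥ F₂)) := by
    rw [hX, hO, midpoint_vsub_midpoint, midpoint_eq_smul_add]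
    norm_num
  set x1 : ℝ := ⟪u, X -ᵥ O⟫ with hx1_def
  set x2 : ℝ := ori.areaForm u (X -ᵥ O) with hx2_def
  have hx1 : x1 = (a1 + b1) / 2 := by
    rw [hx1_def, hXOvec, real_inner_smul_right, inner_add_right, ← ha1_def, ← hb1_def]
    ring
  have hx2 : x2 = (a2 + b2) / 2 := by
    rw [hx2_def, hXOvec, map_smul, map_add, ← ha2_def, ← hb2_def]
    simp
    ring
  -- membership in the line F₁F₂ kills the second coordinate
  have hmem0 : ∀ q ∈ affineSpan ℝ ({F₁, F₂} : Set (EuclideanSpace ℝ (Fin 2))), ori.areaForm u (q -ᵥ F₁) = 0 := by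
    intro q hq
    rw [← vsub_vadd q F₁] at hq
    obtain ⟨c, hc⟩ := vadd_left_mem_affineSpan_pair.mp hq
    rw [← hc, ← hu_def, map_smul, Orientation.areaForm_apply_self, smul_zero]
  -- opposite sides gives a2 * b2 < 0
  obtain ⟨⟨q₁, hq₁, q₂, hq₂, hray⟩, hAmem, hBmem⟩ := hSide
  have ha2 : a2 ≠ 0 := by
    intro h0
    apply hAmem
    have hA1 : a1 ^ 2 = N ^ 2 / 2 := by rw [← h1, h0]; ring
    have hz : ‖N • (A -ᵥ F₁) - a1 • u‖ ^ 2 = 0 := by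
      rw [norm_sub_sq_real, real_inner_smul_left, real_inner_smul_right, real_inner_comm,
        ← ha1_def, norm_smul, norm_smul, mul_pow, mul_pow, Real.norm_eq_abs, Real.norm_eq_abs,
        sq_abs, sq_abs, hnA, ← hN_def]
      linear_combination (-N : ℝ) * hA1
    have hv0 : N • (A -ᵥ F₁) = a1 • u := by
      have := norm_eq_zero.mp (pow_eq_zero_iff (n := 2) (by norm_num) |>.mp hz)
      rwa [sub_eq_zero] at this
    have hAF : A -ᵥ F₁ = (a1 / N) • u := by
      calc A -ᵥ F₁ = (1 / N) • (N • (A -ᵥ F₁)) := by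
            rw [smul_smul, one_div, inv_mul_cancel₀ hN.ne', one_smul]
        _ = (1 / N) • (a1 • u) := by rw [hv0]
        _ = (a1 / N) • u := by rw [smul_smul, one_div, inv_mul_eq_div]
    have hkey : ((a1 / N) : ℝ) • (F₂ -ᵥ F₁) = A -ᵥ F₁ := by
      rw [← hu_def]; exact hAF.symm
    rw [← vsub_vadd A F₁]
    exact vadd_left_mem_affineSpan_pair.mpr ⟨a1 / N, hkey⟩
  have hb2 : b2 ≠ 0 := by
    intro h0
    apply hBmem
    have hB1 : b1 ^ 2 = N ^ 2 / 2 := by rw [← h2, h0]; ring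
    have hz : ‖N • (B -ᵥ F₂) - b1 • u‖ ^ 2 = 0 := by
      rw [norm_sub_sq_real, real_inner_smul_left, real_inner_smul_right, real_inner_comm,
        ← hb1_def, norm_smul, norm_smul, mul_pow, mul_pow, Real.norm_eq_abs, Real.norm_eq_abs,
        sq_abs, sq_abs, hnB, ← hN_def]
      linear_combination (-N : ℝ) * hB1
    have hv0 : N • (B -ᵥ F₂) = b1 • u := by
      have := norm_eq_zero.mp (pow_eq_zero_iff (n := 2) (by norm_num) |>.mp hz)
      rwa [sub_eq_zero] at this
    have hBF : B -ᵥ F₂ = (b1 / N) • u := by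
      calc B -ᵥ F₂ = (1 / N) • (N • (B -ᵥ F₂)) := by
            rw [smul_smul, one_div, inv_mul_cancel₀ hN.ne', one_smul]
        _ = (1 / N) • (b1 • u) := by rw [hv0]
        _ = (b1 / N) • u := by rw [smul_smul, one_div, inv_mul_eq_div]
    have hkey : ((-(b1 / N)) : ℝ) • (F₁ -ᵥ F₂) = B -ᵥ F₂ := by
      rw [neg_smul, ← neg_vsub_eq_vsub_rev F₂ F₁, ← hu_def, smul_neg, neg_neg, ← hBF]
    rw [← vsub_vadd B F₂]
    exact vadd_right_mem_affineSpan_pair.mpr ⟨-(b1 / N), hkey⟩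
  have hab : a2 * b2 < 0 := by
    have hray2 := hray.map (ori.areaForm u)
    have e1 : ori.areaForm u (A -ᵥ q₁) = a2 := by
      rw [← vsub_sub_vsub_cancel_right A q₁ F₁, map_sub, hmem0 q₁ hq₁, ← ha2_def, sub_zero]
    have e2 : ori.areaForm u (q₂ -ᵥ B) = -b2 := by
      have hBv : q₂ -ᵥ B = (q₂ -ᵥ F₁) - ((B -ᵥ F₂) + u) := by
        rw [hu_def]
        simp only [vsub_eq_sub]
        abel
      rw [hBv, map_sub, hmem0 q₂ hq₂, map_add, Orientation.areaForm_apply_self, ← hb2_def]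
      ring
    rw [e1, e2] at hray2
    have hnn := sameRay_real_mul_nonneg hray2
    have hnn' : a2 * -b2 = -(a2 * b2) := by ring
    have : a2 * b2 ≤ 0 := by rw [hnn'] at hnn; linarith
    rcases this.lt_or_eq with h | h
    · exact h
    · exact absurd (mul_eq_zero.mp h) (by push_neg; exact ⟨ha2, hb2⟩)
  -- main algebraic identities
  have hb2a2 : b2 - a2 ≠ 0 := by
    intro h
    have : b2 = a2 := by linarith
    rw [this] at hab
    have := mul_self_nonneg a2
    linarith
  have hD : a1 * b2 - a2 * b1 ≠ 0 := by
    intro h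
    rw [h, mul_zero] at h45
    exact hb2 ((mul_eq_zero.mp h45.symm).resolve_left hN.ne')
  have hE : (rA * a1 - N / 2) * ((a2 + b2) / 2) + (rA * a2) * ((a1 + b1) / 2) = 0 := by
    have h0 : ((rA * a1 - N / 2) * ((a2 + b2) / 2) + (rA * a2) * ((a1 + b1) / 2)) *
        (a1 * b2 - a2 * b1) = 0 := by
      linear_combination ((-3/8)*N^2 + (-1/2)*rA*N^2 + b2^2*rA + (3/8)*b1*N + (-1/4)*b1*rA*N + (1/2)*b1^2 + (1/4)*a2*b2 + (1/8)*a1*N + (1/4)*a1*rA*N + (-1/4)*a1*b1) * h1 + ((3/8)*N^2 + (1/2)*rA*N^2 + (1/8)*b1*N + (1/4)*b1*rA*N + (1/4)*a2*b2 + (-1/2)*a2^2 + -1*a2^2*rA + (-5/8)*a1*N + (-1/4)*a1*rA*N + (-1/4)*a1*b1) * h2 + ((1/8)*N^2 + (-1/8)*b1*N + (-1/4)*b1*rA*N + (-1/4)*a2*b2 + (-1/8)*a1*N + (-1/4)*a1*rA*N + (1/4)*a1*b1) * h3 + ((1/2)*b2*N + (-1/2)*a2*N + (-1/2)*a2*b1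 + (-1/2)*a1*b2 + a1*a2) * h45
    exact (mul_eq_zero.mp h0).resolve_right hD
  have hG : (rA * a1 - N / 2) * ((a1 + b1) / 2) + (rA * a2) * ((a2 + b2) / 2) =
      (((a1 + b1) / 2) ^ 2 + ((a2 + b2) / 2) ^ 2) / 2 := by
    have h0 : ((rA * a1 - N / 2) * ((a1 + b1) / 2) + (rA * a2) * ((a2 + b2) / 2) -
        (((a1 + b1) / 2) ^ 2 + ((a2 + b2) / 2) ^ 2) / 2) * (a1 * b2 - a2 * b1) ^ 2 = 0 := by
      linear_combination ((1/16)*N^4 + (-1/8)*b2^2*N^2 + (-1/8)*b2^4 + (-1/4)*b1*N^3 + (1/4)*b1*b2^2*N + (-1/4)*b1^2*N^2 + (-1/8)*b1^2*b2^2 + (1/8)*a2*b2*N^2 + (-1/4)*a2*b2^3 + (-1/2)*a2*b1*b2*N + (-1/16)*a2^2*N^2 + (1/4)*a2^2*b2^2 + (-1/8)*a2^2*b1^2 + (1/4)*a1*b2^2*N + (1/8)*a1*b1*N^2 + (-1/4)*a1*b1*b2^2 + (1/2)*a1*a2*b1*b2 + (-1/8)*a1^2*b2^2) * h1 + ((-1/16)*N^4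 + (-1/8)*b2^2*N^2 + (1/8)*a2*b2*N^2 + (1/16)*a2^2*N^2 + (3/8)*a2^2*b2^2 + (-1/4)*a2^2*b1*N + (-1/8)*a2^2*b1^2 + (-1/4)*a2^3*b2 + (1/4)*a1*N^3 + (1/8)*a1*b1*N^2 + (1/2)*a1*a2*b2*N + (1/2)*a1*a2*b1*b2 + (-1/4)*a1*a2^2*N + (-1/4)*a1*a2^2*b1) * h2 + ((-1/16)*N^4 + (1/16)*b2^2*N^2 + (-1/8)*a2*b2*N^2 + (1/16)*a2^2*N^2 + (-1/4)*a2^2*b2^2 + (-1/8)*a1*b1*N^2 + (-1/4)*a1*a2*b1*b2) * h3 + ((-1/2)*a2^2*b1*b2 + (-1/2)*a2^3*b1 + (1/2)*a1*a2*b2^2 + (-1/2)*a1*a2*b1^2 + (1/2)*a1*a2^2*b2 + (1/2)*a1^2*b1*b2 + (-1/2)*a1^2*a2*b1 + (1/2)*a1^3*b2) * h45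
    have := (mul_eq_zero.mp h0).resolve_right (pow_ne_zero 2 hD)
    linarith [this]
  have hL : (((a1 + b1) / 2) ^ 2 + ((a2 + b2) / 2) ^ 2) ^ 2 =
      N ^ 2 / 2 * (((a1 + b1) / 2) ^ 2 - ((a2 + b2) / 2) ^ 2) := by
    have h0 : ((((a1 + b1) / 2) ^ 2 + ((a2 + b2) / 2) ^ 2) ^ 2 -
        N ^ 2 / 2 * (((a1 + b1) / 2) ^ 2 - ((a2 + b2) / 2) ^ 2)) * (b2 - a2) = 0 := by
      linear_combination ((-9/32)*b2*N^2 + (1/8)*b2^3 + (-3/8)*b1*b2*N + (1/8)*b1^2*b2 + (-7/32)*a2*N^2 + (1/4)*a2*b2^2 + (1/8)*a2*b1*N + (-1/8)*a2*b1^2 + (-5/16)*a2^2*b2 + (-1/16)*a2^3 + (1/8)*a1*b2*N + (3/8)*a1*b1*b2 + (1/8)*a1*a2*N + (-3/8)*a1*a2*b1 + (1/16)*a1^2*b2 + (-1/16)*a1^2*a2) * h1 + ((9/32)*b2*N^2 + (1/16)*b2^3 + (1/8)*b1*b2*N + (1/16)*b1^2*b2 + (7/32)*a2*N^2 + (5/16)*a2*b2^2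 + (1/8)*a2*b1*N + (-1/16)*a2*b1^2 + (-3/8)*a2^2*b2 + (1/8)*a1*b2*N + (3/8)*a1*b1*b2 + (-3/8)*a1*a2*N + (-3/8)*a1*a2*b1) * h2 + ((-1/16)*b2*N^2 + (-1/8)*b1*b2*N + (1/16)*a2*N^2 + (-1/8)*a2*b2^2 + (-1/8)*a2*b1*N + (1/8)*a2^2*b2 + (-1/8)*a1*b2*N + (-1/8)*a1*b1*b2 + (-1/8)*a1*a2*N + (1/8)*a1*a2*b1) * h3
    have := (mul_eq_zero.mp h0).resolve_right hb2a2
    linarith [this]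
  -- positivity facts
  have hXOne : (X -ᵥ O : (EuclideanSpace ℝ (Fin 2))) ≠ 0 := vsub_ne_zero.mpr hXO
  have hQpos : 0 < x1 ^ 2 + x2 ^ 2 := by
    have := ori.inner_sq_add_areaForm_sq u (X -ᵥ O)
    rw [← hx1_def, ← hx2_def] at this
    rw [this]
    have : 0 < ‖(X -ᵥ O : (EuclideanSpace ℝ (Fin 2)))‖ := norm_pos_iff.mpr hXOne
    positivity
  have hQpos' : 0 < ((a1 + b1) / 2) ^ 2 + ((a2 + b2) / 2) ^ 2 := by
    rw [← hx1, ← hx2]; exact hQpos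
  have hxx : 0 < ((a1 + b1) / 2) ^ 2 - ((a2 + b2) / 2) ^ 2 := by
    have hh : ((a1 + b1) / 2) ^ 2 - ((a2 + b2) / 2) ^ 2 =
        (((a1 + b1) / 2) ^ 2 + ((a2 + b2) / 2) ^ 2) ^ 2 * 2 / N ^ 2 := by
      rw [eq_div_iff (pow_pos hN 2).ne']
      linear_combination (-2 : ℝ) * hL
    rw [hh]
    exact div_pos (mul_pos (pow_pos hQpos' 2) two_pos) (pow_pos hN 2)
  set lam : ℝ := (((a1 + b1) / 2) ^ 2 + ((a2 + b2) / 2) ^ 2) /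
      (2 * (((a1 + b1) / 2) ^ 2 - ((a2 + b2) / 2) ^ 2)) with hlam_def
  have hlam : 0 < lam := div_pos hQpos' (by linarith)
  have hp1lam : rA * a1 - N / 2 = lam * ((a1 + b1) / 2) := by
    rw [hlam_def]
    rw [div_mul_eq_mul_div, eq_div_iff (by linarith : 2 * (((a1 + b1) / 2) ^ 2 - ((a2 + b2) / 2) ^ 2) ≠ 0)]
    linear_combination 2 * ((a1 + b1) / 2) * hG - 2 * ((a2 + b2) / 2) * hE
  have hp2lam' : -(rA * a2) = lam * ((a2 + b2) / 2) := by
    rw [hlam_def]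
    rw [div_mul_eq_mul_div, eq_div_iff (by linarith : 2 * (((a1 + b1) / 2) ^ 2 - ((a2 + b2) / 2) ^ 2) ≠ 0)]
    linear_combination 2 * ((a2 + b2) / 2) * hG - 2 * ((a1 + b1) / 2) * hE
  have hp2lam : rA * a2 = -(lam * ((a2 + b2) / 2)) := by linarith [hp2lam']
  -- coordinates of P - O versus X - O
  have hp1x : p1 = lam * x1 := by rw [hp1, hx1, hp1lam]
  have hp2x : p2 = -(lam * x2) := by rw [hp2, hx2, hp2lam]
  -- the distance identity : dist P X = dist P O
  have hPX : P -ᵥ X = (P -ᵥ O) - (X -ᵥ O) := (vsub_sub_vsub_cancel_right P X O).symm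
  have hdPX : dist P X = dist P O := by
    have i1 : ⟪u, P -ᵥ X⟫ = p1 - x1 := by
      rw [hPX, inner_sub_right, ← hp1_def, ← hx1_def]
    have i2 : ori.areaForm u (P -ᵥ X) = p2 - x2 := by
      rw [hPX, map_sub, ← hp2_def, ← hx2_def]
    have k1 := ori.inner_sq_add_areaForm_sq u (P -ᵥ X)
    have k2 := ori.inner_sq_add_areaForm_sq u (P -ᵥ O)
    rw [i1, i2, ← hN_def] at k1
    rw [← hp1_def, ← hp2_def, ← hN_def] at k2
    have hsq : (p1 - x1) ^ 2 + (p2 - x2) ^ 2 = p1 ^ 2 + p2 ^ 2 := by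
      rw [hp1x, hp2x]
      have hGx : lam * x1 * x1 + -(lam * x2) * x2 = (x1 ^ 2 + x2 ^ 2) / 2 := by
        rw [hx1, hx2]
        calc lam * ((a1 + b1) / 2) * ((a1 + b1) / 2) + -(lam * ((a2 + b2) / 2)) * ((a2 + b2) / 2)
            = (rA * a1 - N / 2) * ((a1 + b1) / 2) + (rA * a2) * ((a2 + b2) / 2) := by
              rw [hp1lam, hp2lam]
          _ = (((a1 + b1) / 2) ^ 2 + ((a2 + b2) / 2) ^ 2) / 2 := hG
      linear_combination (-2 : ℝ) * hGx
    have hnorm : ‖(P -ᵥ X : (EuclideanSpace ℝ (Fin 2)))‖ ^ 2 = ‖(P -ᵥ O : (EuclideanSpace ℝ (Fin 2)))‖ ^ 2 := by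
      have : N * ‖(P -ᵥ X : (EuclideanSpace ℝ (Fin 2)))‖ ^ 2 = N * ‖(P -ᵥ O : (EuclideanSpace ℝ (Fin 2)))‖ ^ 2 := by
        rw [← k1, ← k2, hsq]
      exact mul_left_cancel₀ hN.ne' this
    rw [dist_eq_norm_vsub (EuclideanSpace ℝ (Fin 2)), dist_eq_norm_vsub (EuclideanSpace ℝ (Fin 2))]
    have := congrArg Real.sqrt hnorm
    rwa [Real.sqrt_sq (norm_nonneg _), Real.sqrt_sq (norm_nonneg _)] at this
  -- the oriented angle identity ∡ X O F₁ = ∡ F₁ O P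
  have hF1O : F₁ ≠ O := by
    rw [hO]
    intro h
    exact hF ((midpoint_eq_left_iff (R := ℝ)).mp h.symm)
  have hangle : ∡ X O F₁ = ∡ F₁ O P := by
    have i1 : ⟪X -ᵥ O, F₁ -ᵥ O⟫ = -(1 / 2) * x1 := by
      rw [hFO, real_inner_smul_right, real_inner_comm, ← hx1_def]
    have i2 : ori.areaForm (X -ᵥ O) (F₁ -ᵥ O) = (1 / 2) * x2 := by
      rw [hFO, map_smul, smul_eq_mul, ori.areaForm_swap (X -ᵥ O) u, ← hx2_def]
      ring
    have i3 : ⟪F₁ -ᵥ O, P -ᵥ O⟫ = -(1 / 2) * p1 := by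
      rw [hFO, real_inner_smul_left, ← hp1_def]
    have i4 : ori.areaForm (F₁ -ᵥ O) (P -ᵥ O) = -(1 / 2) * p2 := by
      rw [hFO, map_smul, LinearMap.smul_apply, smul_eq_mul, ← hp2_def]
    have hkeq : ori.kahler (F₁ -ᵥ O) (P -ᵥ O) = (lam : ℂ) * ori.kahler (X -ᵥ O) (F₁ -ᵥ O) := by
      rw [ori.kahler_apply_apply, ori.kahler_apply_apply, i1, i2, i3, i4, hp1x, hp2x]
      simp only [Complex.real_smul]
      push_cast
      ring
    have harg : Complex.arg (ori.kahler (X -ᵥ O) (F₁ -ᵥ O)) =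
        Complex.arg (ori.kahler (F₁ -ᵥ O) (P -ᵥ O)) := by
      rw [hkeq, Complex.arg_real_mul _ hlam]
    show ori.oangle (X -ᵥ O) (F₁ -ᵥ O) = ori.oangle (F₁ -ᵥ O) (P -ᵥ O)
    simp only [Orientation.oangle]
    exact congrArg _ harg
  constructor
  · have hsum : ∡ X O F₁ + ∡ F₁ O P = ∡ X O P := oangle_add hXO hF1O hPO
    rw [← hsum, hangle, two_zsmul]
  · rw [EuclideanGeometry.angle_eq_angle_of_dist_eq hdPX, EuclideanGeometry.angle_comm]
end
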